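/- arXiv:1501.02414 — 9 statements merged into one kernel-verified Lean document; each statement's English description precedes it below -/
import Mathlib

section
/- Let χ ∈ (0,1), d a positive integer, h ∈ ℝ^d, {Ā_k} a sequence of symmetric positive-semidefinite real d×d matrices and {b̄_k} a sequence in ℝ^d, and let {h̄_k} satisfy h̄_{k+1} = h̄_k + k^{-χ}(b̄_k − Ā_k h̄_k) for all k ≥ 1. If k^{1−χ}|h̄_k − h| → 0 as k → ∞ and the sequence n^{-χ} Σ_{k=1}^n k^{χ−1}‖Ā_k‖ is bounded in n, then |n^{-χ} Σ_{k=1}^n (b̄_k − Ā_k h)| → 0 as n → ∞. -/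
open Filter Finset
open scoped RealInnerProductSpace Topology

/-!
Put `g k = h̄_k - h`. The recursion says `b̄_k - Ā_k h = k^χ (g_{k+1} - g_k) + Ā_k g_k`, and
summation by parts turns `Σ_{k ≤ n} k^χ (g_{k+1} - g_k)` into
`n^χ g_{n+1} - Σ_{k ≤ n} (k^χ - (k-1)^χ) g_k`. After multiplying by `n^{-χ}` every term is a
weighted average of a null sequence whose normalised weights stay bounded: the weights
`k^χ - (k-1)^χ` sum to `n^χ`, and `‖Ā_k g_k‖ ≤ (k^{χ-1}‖Ā_k‖)(k^{1-χ}|g_k|)`. Such averages tend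
to zero (a Toeplitz-type argument).
-/

theorem tendsto_mul_sum_mul_of_tendsto_zero {s : ℕ → Finset ℕ} {c w δ : ℕ → ℝ}
    (hc : Tendsto c atTop (𝓝 0)) (hc0 : ∀ n, 0 ≤ c n) (hw : ∀ k, 0 ≤ w k)
    (hδ : ∀ k, 0 ≤ δ k) (hδ0 : Tendsto δ atTop (𝓝 0)) {K : ℝ}
    (hK : ∀ n, c n * ∑ k ∈ s n, w k ≤ K) :
    Tendsto (fun n => c n * ∑ k ∈ s n, w k * δ k) atTop (𝓝 0) := by
  rw [NormedAddGroup.tendsto_nhds_zero]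
  intro ε hε
  set η := ε / (2 * (|K| + 1))
  have hη : 0 < η := by positivity
  have hηK : η * K ≤ ε / 2 := calc
    η * K ≤ η * (|K| + 1) := by gcongr; linarith [le_abs_self K]
    _ = ε / 2 := by simp only [η]; field_simp
  obtain ⟨m, hm⟩ := eventually_atTop.1 (hδ0.eventually (gt_mem_nhds hη))
  set C := ∑ k ∈ range m, w k * δ k
  have hC : Tendsto (fun n => c n * C) atTop (𝓝 0) := by simpa using hc.mul_const C
  filter_upwards [hC.eventually (gt_mem_nhds (half_pos hε))] with n hn
  -- Split off the finitely many terms with `k < m`, where `δ k` may still be large.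
  have hsplit : ∑ k ∈ s n, w k * δ k ≤ η * ∑ k ∈ s n, w k + C := by
    rw [← sum_filter_add_sum_filter_not (s n) (m ≤ ·), mul_sum]
    gcongr ?_ + ?_
    · calc ∑ k ∈ s n with m ≤ k, w k * δ k ≤ ∑ k ∈ s n with m ≤ k, η * w k :=
            sum_le_sum fun k hk => by
              rw [mul_comm η]; exact mul_le_mul_of_nonneg_left (hm k (mem_filter.1 hk).2).le (hw k)
        _ ≤ ∑ k ∈ s n, η * w k :=
            sum_le_sum_of_subset_of_nonneg (filter_subset _ _) fun k _ _ => mul_nonneg hη.le (hw k)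
    · exact sum_le_sum_of_subset_of_nonneg (fun k hk => by simpa using (mem_filter.1 hk).2)
        fun k _ _ => mul_nonneg (hw k) (hδ k)
  have hpos : 0 ≤ c n * ∑ k ∈ s n, w k * δ k :=
    mul_nonneg (hc0 n) (sum_nonneg fun k _ => mul_nonneg (hw k) (hδ k))
  rw [Real.norm_of_nonneg hpos]
  calc c n * ∑ k ∈ s n, w k * δ k ≤ c n * (η * ∑ k ∈ s n, w k + C) := by gcongr; exact hc0 n
    _ = η * (c n * ∑ k ∈ s n, w k) + c n * C := by ring
    _ ≤ η * K + c n * C := by gcongr; exact hK n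
    _ < ε := by linarith

theorem sum_Icc_sub_pred {M : Type*} [AddCommGroup M] (f : ℕ → M) (n : ℕ) :
    ∑ k ∈ Icc 1 n, (f k - f (k - 1)) = f n - f 0 := by
  induction n with
  | zero => simp
  | succ n ih => rw [sum_Icc_succ_top (by omega), ih, Nat.add_sub_cancel]; abel

theorem sum_Icc_smul_sub_eq {E : Type*} [AddCommGroup E] [Module ℝ E] (a : ℕ → ℝ) (g : ℕ → E)
    (n : ℕ) :
    ∑ k ∈ Icc 1 n, a k • (g (k + 1) - g k) =
      a n • g (n + 1) - a 0 • g 1 - ∑ k ∈ Icc 1 n, (a k - a (k - 1)) • g k := by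
  induction n with
  | zero => simp
  | succ n ih =>
    rw [sum_Icc_succ_top (by omega), sum_Icc_succ_top (by omega), ih, Nat.add_sub_cancel]
    module

theorem tendsto_zero_of_rpow_mul_tendsto_zero {p : ℝ} (hp : 0 ≤ p) {u : ℕ → ℝ}
    (hu : ∀ k, 0 ≤ u k) (h : Tendsto (fun k : ℕ => (k : ℝ) ^ p * u k) atTop (𝓝 0)) :
    Tendsto u atTop (𝓝 0) := by
  refine squeeze_zero' (.of_forall hu) ?_ h
  filter_upwards [eventually_ge_atTop 1] with k hk
  exact le_mul_of_one_le_left (hu k) (Real.one_le_rpow (by exact_mod_cast hk) hp)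

theorem rpow_sub_rpow_pred_nonneg {χ : ℝ} (hχ : 0 ≤ χ) (k : ℕ) :
    0 ≤ (k : ℝ) ^ χ - ((k - 1 : ℕ) : ℝ) ^ χ :=
  sub_nonneg.2 (Real.rpow_le_rpow (Nat.cast_nonneg _) (by exact_mod_cast k.sub_le 1) hχ)

theorem rpow_neg_mul_sum_rpow_sub_rpow_pred_le_one (χ : ℝ) (n : ℕ) :
    (n : ℝ) ^ (-χ) * ∑ k ∈ Icc 1 n, ((k : ℝ) ^ χ - ((k - 1 : ℕ) : ℝ) ^ χ) ≤ 1 := by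
  rw [sum_Icc_sub_pred (fun k : ℕ => (k : ℝ) ^ χ)]
  rcases n.eq_zero_or_pos with rfl | hn
  · simp
  · rw [mul_sub, Real.rpow_neg (Nat.cast_nonneg n), inv_mul_cancel₀ (by positivity)]
    simp only [Nat.cast_zero, sub_le_self_iff]
    positivity

section Recursion

variable {E : Type*} [NormedAddCommGroup E] [NormedSpace ℝ E]
  {χ : ℝ} {A : ℕ → E →L[ℝ] E} {b x : ℕ → E} {h : E}

theorem sum_sub_apply_eq_of_rec (hχ : χ ≠ 0)
    (hrec : ∀ k : ℕ, 1 ≤ k → x (k + 1) = x k + (k : ℝ) ^ (-χ) • (b k - A k (x k))) (n : ℕ) :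
    ∑ k ∈ Icc 1 n, (b k - A k h) =
      (n : ℝ) ^ χ • (x (n + 1) - h)
        - ∑ k ∈ Icc 1 n, ((k : ℝ) ^ χ - ((k - 1 : ℕ) : ℝ) ^ χ) • (x k - h)
        + ∑ k ∈ Icc 1 n, A k (x k - h) := by
  have hstep : ∀ k ∈ Icc 1 n,
      b k - A k h = (k : ℝ) ^ χ • ((x (k + 1) - h) - (x k - h)) + A k (x k - h) := by
    intro k hk
    have hk0 : (0 : ℝ) < k := by exact_mod_cast (mem_Icc.1 hk).1
    rw [sub_sub_sub_cancel_right, hrec k (mem_Icc.1 hk).1, add_sub_cancel_left, smul_smul,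
      ← Real.rpow_add hk0, add_neg_cancel, Real.rpow_zero, one_smul, map_sub]
    abel
  rw [sum_congr rfl hstep, sum_add_distrib,
    sum_Icc_smul_sub_eq (fun k : ℕ => (k : ℝ) ^ χ) (fun k => x k - h)]
  simp [Real.zero_rpow hχ]

theorem norm_rpow_neg_smul_sum_sub_apply_le (hχ : 0 < χ)
    (hrec : ∀ k : ℕ, 1 ≤ k → x (k + 1) = x k + (k : ℝ) ^ (-χ) • (b k - A k (x k)))
    {n : ℕ} (hn : 0 < n) :
    ‖(n : ℝ) ^ (-χ) • ∑ k ∈ Icc 1 n, (b k - A k h)‖ ≤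
      ‖x (n + 1) - h‖
        + (n : ℝ) ^ (-χ) * ∑ k ∈ Icc 1 n, ((k : ℝ) ^ χ - ((k - 1 : ℕ) : ℝ) ^ χ) * ‖x k - h‖
        + (n : ℝ) ^ (-χ) *
            ∑ k ∈ Icc 1 n, ((k : ℝ) ^ (χ - 1) * ‖A k‖) * ((k : ℝ) ^ (1 - χ) * ‖x k - h‖) := by
  have hn' : (0 : ℝ) < n := by exact_mod_cast hn
  have hweights : ‖∑ k ∈ Icc 1 n, ((k : ℝ) ^ χ - ((k - 1 : ℕ) : ℝ) ^ χ) • (x k - h)‖ ≤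
      ∑ k ∈ Icc 1 n, ((k : ℝ) ^ χ - ((k - 1 : ℕ) : ℝ) ^ χ) * ‖x k - h‖ := by
    refine (norm_sum_le _ _).trans (sum_le_sum fun k _ => ?_)
    rw [norm_smul, Real.norm_of_nonneg (rpow_sub_rpow_pred_nonneg hχ.le k)]
  have hoperators : ‖∑ k ∈ Icc 1 n, A k (x k - h)‖ ≤
      ∑ k ∈ Icc 1 n, ((k : ℝ) ^ (χ - 1) * ‖A k‖) * ((k : ℝ) ^ (1 - χ) * ‖x k - h‖) := by
    refine (norm_sum_le _ _).trans (sum_le_sum fun k hk => ?_)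
    have hk0 : (0 : ℝ) < k := by exact_mod_cast (mem_Icc.1 hk).1
    rw [mul_mul_mul_comm, ← Real.rpow_add hk0, sub_add_sub_cancel', sub_self, Real.rpow_zero,
      one_mul]
    exact (A k).le_opNorm _
  rw [sum_sub_apply_eq_of_rec hχ.ne' hrec n, norm_smul, Real.norm_of_nonneg (by positivity)]
  calc (n : ℝ) ^ (-χ) * ‖(n : ℝ) ^ χ • (x (n + 1) - h)
        - ∑ k ∈ Icc 1 n, ((k : ℝ) ^ χ - ((k - 1 : ℕ) : ℝ) ^ χ) • (x k - h)
        + ∑ k ∈ Icc 1 n, A k (x k - h)‖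
      ≤ (n : ℝ) ^ (-χ) * ((n : ℝ) ^ χ * ‖x (n + 1) - h‖
        + ∑ k ∈ Icc 1 n, ((k : ℝ) ^ χ - ((k - 1 : ℕ) : ℝ) ^ χ) * ‖x k - h‖
        + ∑ k ∈ Icc 1 n, ((k : ℝ) ^ (χ - 1) * ‖A k‖) * ((k : ℝ) ^ (1 - χ) * ‖x k - h‖)) := by
        gcongr
        refine (norm_add_le _ _).trans (add_le_add ((norm_sub_le _ _).trans ?_) hoperators)
        rw [norm_smul, Real.norm_of_nonneg (by positivity)]
        gcongr
    _ = _ := by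
        rw [mul_add, mul_add, ← mul_assoc, ← Real.rpow_add hn', neg_add_cancel, Real.rpow_zero,
          one_mul]

end Recursion

theorem stmt_1_general (d : ℕ) (χ : ℝ) (hχ : χ ∈ Set.Ioo (0 : ℝ) 1)
    (h : EuclideanSpace ℝ (Fin d))
    (Ab : ℕ → EuclideanSpace ℝ (Fin d) →L[ℝ] EuclideanSpace ℝ (Fin d))
    (bb : ℕ → EuclideanSpace ℝ (Fin d))
    (hb : ℕ → EuclideanSpace ℝ (Fin d))
    (hrec : ∀ k : ℕ, 1 ≤ k → hb (k + 1) = hb k + (k : ℝ) ^ (-χ) • (bb k - Ab k (hb k)))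
    (hconv : Tendsto (fun k : ℕ => (k : ℝ) ^ (1 - χ) * ‖hb k - h‖) atTop (𝓝 0))
    (hbdd : ∃ K : ℝ, ∀ n : ℕ,
      (n : ℝ) ^ (-χ) * ∑ k ∈ Icc 1 n, (k : ℝ) ^ (χ - 1) * ‖Ab k‖ ≤ K) :
    Tendsto (fun n : ℕ => ‖(n : ℝ) ^ (-χ) • ∑ k ∈ Icc 1 n, (bb k - Ab k h)‖)
      atTop (𝓝 0) := by
  obtain ⟨hχ0, hχ1⟩ := hχ
  obtain ⟨K, hK⟩ := hbdd
  have hx : Tendsto (fun k => ‖hb k - h‖) atTop (𝓝 0) :=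
    tendsto_zero_of_rpow_mul_tendsto_zero (by linarith) (fun _ => norm_nonneg _) hconv
  have hc : Tendsto (fun n : ℕ => (n : ℝ) ^ (-χ)) atTop (𝓝 0) :=
    (tendsto_rpow_neg_atTop hχ0).comp tendsto_natCast_atTop_atTop
  have hc0 (n : ℕ) : 0 ≤ (n : ℝ) ^ (-χ) := by positivity
  have hweights := tendsto_mul_sum_mul_of_tendsto_zero hc hc0 (rpow_sub_rpow_pred_nonneg hχ0.le)
    (fun _ => norm_nonneg _) hx (rpow_neg_mul_sum_rpow_sub_rpow_pred_le_one χ)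
  have hoperators := tendsto_mul_sum_mul_of_tendsto_zero hc hc0 (fun _ => by positivity)
    (fun _ => by positivity) hconv hK
  refine squeeze_zero' (.of_forall fun n => norm_nonneg _) ?_
    (by simpa using ((hx.comp (tendsto_add_atTop_nat 1)).add hweights).add hoperators)
  filter_upwards [eventually_gt_atTop 0] with n hn
  exact norm_rpow_neg_smul_sum_sub_apply_le hχ0 hrec hn

/-- Theorem 1(b): converse direction. If `k^{1−χ}|h̄_k − h| → 0` and
`n^{-χ} Σ_{k=1}^n k^{χ−1}‖Ā_k‖` is bounded in `n`, then
`|n^{-χ} Σ_{k=1}^n (b̄_k − Ā_k h)| → 0`. -/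
theorem stmt_1 (d : ℕ) (hd : 0 < d) (χ : ℝ) (hχ : χ ∈ Set.Ioo (0 : ℝ) 1)
    (h : EuclideanSpace ℝ (Fin d))
    (Ab : ℕ → EuclideanSpace ℝ (Fin d) →L[ℝ] EuclideanSpace ℝ (Fin d))
    (hAbsym : ∀ (k : ℕ) (x y : EuclideanSpace ℝ (Fin d)), ⟪Ab k x, y⟫ = ⟪x, Ab k y⟫)
    (hAbpsd : ∀ (k : ℕ) (x : EuclideanSpace ℝ (Fin d)), 0 ≤ ⟪Ab k x, x⟫)
    (bb : ℕ → EuclideanSpace ℝ (Fin d))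
    (hb : ℕ → EuclideanSpace ℝ (Fin d))
    (hrec : ∀ k : ℕ, 1 ≤ k → hb (k + 1) = hb k + (k : ℝ) ^ (-χ) • (bb k - Ab k (hb k)))
    (hconv : Tendsto (fun k : ℕ => (k : ℝ) ^ (1 - χ) * ‖hb k - h‖) atTop (𝓝 0))
    (hbdd : ∃ K : ℝ, ∀ n : ℕ,
      (n : ℝ) ^ (-χ) * ∑ k ∈ Icc 1 n, (k : ℝ) ^ (χ - 1) * ‖Ab k‖ ≤ K) :
    Tendsto (fun n : ℕ => ‖(n : ℝ) ^ (-χ) • ∑ k ∈ Icc 1 n, (bb k - Ab k h)‖)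
      atTop (𝓝 0) :=
  stmt_1_general d χ hχ h Ab bb hb hrec hconv hbdd
end

section
/- Let χ ∈ (0,1), d a positive integer, A a symmetric positive-definite real d×d matrix and {Ā_k} a sequence of symmetric positive-semidefinite d×d matrices. If ‖n^{-χ} Σ_{k=1}^n (Ā_k − A)‖ → 0 as n → ∞, then the sequence n^{-χ} Σ_{k=1}^n k^{χ−1}‖Ā_k‖ is bounded in n. -/
open Filter Finset
open scoped RealInnerProductSpace Topology

/-!
For a positive semidefinite operator the norm is at most the trace, and the trace is additive and
at most `d` times the norm; hence `∑_{k ≤ m} ‖Ā_k‖ ≤ d ‖∑_{k ≤ m} Ā_k‖`, which is `O(m)` because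
the hypothesis makes `∑_{k ≤ m} (Ā_k - A)` of order `m^χ`. Since `k^(χ-1)` decreases, Abel
summation turns this linear bound on partial sums into
`∑_{k ≤ n} k^(χ-1) ‖Ā_k‖ ≤ C ∑_{k ≤ n} k^(χ-1) ≤ C n^χ / χ`.
-/

namespace ContinuousLinearMap

variable {E : Type*} [NormedAddCommGroup E] [InnerProductSpace ℝ E] [FiniteDimensional ℝ E]

theorem IsPositive.norm_le_trace {T : E →L[ℝ] E} (hT : T.IsPositive) :
    ‖T‖ ≤ LinearMap.trace ℝ E T := by
  have hT' := hT.toLinearMap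
  set e := hT'.isSymmetric.eigenvectorBasis rfl
  set μ := hT'.isSymmetric.eigenvalues rfl
  have hμ : ∀ i, 0 ≤ μ i := hT'.nonneg_eigenvalues rfl
  have htrace : LinearMap.trace ℝ E T = ∑ i, μ i := by
    simpa using hT'.isSymmetric.trace_eq_sum_eigenvalues rfl
  rw [htrace]
  refine opNorm_le_bound _ (sum_nonneg fun i _ => hμ i) fun x => ?_
  calc ‖T x‖ = ‖∑ i, (⟪e i, x⟫ * μ i) • e i‖ := by
        conv_lhs => rw [← e.sum_repr' x]
        simp only [map_sum, map_smul]
        congr 1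
        refine Finset.sum_congr rfl fun i _ => ?_
        have he := hT'.isSymmetric.apply_eigenvectorBasis rfl i
        simp only [coe_coe, RCLike.ofReal_real_eq_id, id] at he
        rw [he, smul_smul]
    _ ≤ ∑ i, ‖(⟪e i, x⟫ * μ i) • e i‖ := norm_sum_le _ _
    _ ≤ ∑ i, μ i * ‖x‖ := by
        gcongr with i
        rw [norm_smul, e.orthonormal.1 i, mul_one, norm_mul, Real.norm_of_nonneg (hμ i), mul_comm]
        gcongr
        · exact hμ i
        · simpa [e.orthonormal.1 i] using abs_real_inner_le_norm (e i) x
    _ = (∑ i, μ i) * ‖x‖ := (sum_mul _ _ _).symm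

theorem abs_trace_le_finrank_mul_norm (T : E →L[ℝ] E) :
    |LinearMap.trace ℝ E T| ≤ Module.finrank ℝ E * ‖T‖ := by
  set b := stdOrthonormalBasis ℝ E
  rw [LinearMap.trace_eq_sum_inner _ b]
  calc |∑ i, ⟪b i, T (b i)⟫| ≤ ∑ i, |⟪b i, T (b i)⟫| := abs_sum_le_sum_abs _ _
    _ ≤ ∑ _i, ‖T‖ := by
        gcongr with i
        refine (abs_real_inner_le_norm _ _).trans ?_
        simpa [b.orthonormal.1 i] using T.le_opNorm (b i)
    _ = Module.finrank ℝ E * ‖T‖ := by simp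

theorem sum_norm_le_finrank_mul_norm_sum {ι : Type*} (s : Finset ι) {T : ι → E →L[ℝ] E}
    (hT : ∀ k ∈ s, (T k).IsPositive) :
    ∑ k ∈ s, ‖T k‖ ≤ Module.finrank ℝ E * ‖∑ k ∈ s, T k‖ := by
  calc ∑ k ∈ s, ‖T k‖ ≤ ∑ k ∈ s, LinearMap.trace ℝ E (T k) :=
        sum_le_sum fun k hk => (hT k hk).norm_le_trace
    _ = LinearMap.trace ℝ E ((∑ k ∈ s, T k : E →L[ℝ] E) : E →ₗ[ℝ] E) := by
        rw [toLinearMap_sum, map_sum]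
    _ ≤ Module.finrank ℝ E * ‖∑ k ∈ s, T k‖ :=
        (le_abs_self _).trans (abs_trace_le_finrank_mul_norm _)

end ContinuousLinearMap

theorem mul_rpow_sub_one_le_rpow_sub_rpow {χ x : ℝ} (hχ0 : 0 ≤ χ) (hχ1 : χ ≤ 1)
    (hx : 1 ≤ x) :
    χ * x ^ (χ - 1) ≤ x ^ χ - (x - 1) ^ χ := by
  have hx0 : 0 < x := one_pos.trans_le hx
  -- Bernoulli's inequality `(1 - 1/x)^χ ≤ 1 - χ/x`, multiplied by `x^χ`.
  have hs : -1 ≤ -1 / x := by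
    rw [neg_div, neg_le_neg_iff]
    exact div_le_one_of_le₀ hx hx0.le
  have hbern : (1 + -1 / x) ^ χ ≤ 1 + χ * (-1 / x) :=
    rpow_one_add_le_one_add_mul_self hs hχ0 hχ1
  have hsplit : (x - 1) ^ χ = (1 + -1 / x) ^ χ * x ^ χ := by
    rw [← Real.mul_rpow (by linarith) hx0.le]
    congr 1
    field_simp
    ring
  calc χ * x ^ (χ - 1) = x ^ χ - (1 + χ * (-1 / x)) * x ^ χ := by
        rw [Real.rpow_sub_one hx0.ne']; field_simp; ring
    _ ≤ x ^ χ - (x - 1) ^ χ := by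
        rw [hsplit]; gcongr

theorem sum_Icc_rpow_sub_one_le {χ : ℝ} (hχ0 : 0 < χ) (hχ1 : χ ≤ 1) (n : ℕ) :
    ∑ k ∈ Icc 1 n, (k : ℝ) ^ (χ - 1) ≤ (n : ℝ) ^ χ / χ := by
  induction n with
  | zero => simp [Real.zero_rpow hχ0.ne']
  | succ n ih =>
    have hstep := mul_rpow_sub_one_le_rpow_sub_rpow hχ0.le hχ1
      (by simp : (1 : ℝ) ≤ (n + 1 : ℕ))
    rw [Nat.cast_add_one, add_sub_cancel_right] at hstep
    rw [sum_Icc_succ_top (Nat.le_add_left 1 n)]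
    calc ∑ k ∈ Icc 1 n, (k : ℝ) ^ (χ - 1) + ((n + 1 : ℕ) : ℝ) ^ (χ - 1)
        ≤ (n : ℝ) ^ χ / χ + (((n : ℝ) + 1) ^ χ - (n : ℝ) ^ χ) / χ := by
          push_cast
          gcongr
          rw [le_div_iff₀ hχ0]
          linarith
      _ = ((n + 1 : ℕ) : ℝ) ^ χ / χ := by push_cast; ring

theorem sum_Icc_mul_nonpos_of_antitoneOn {w h : ℕ → ℝ} (hw : AntitoneOn w (Set.Ici 1))
    (hw0 : ∀ k, 0 ≤ w k) (hh : ∀ m, ∑ k ∈ Icc 1 m, h k ≤ 0) (n : ℕ) :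
    ∑ k ∈ Icc 1 n, w k * h k ≤ 0 := by
  -- Abel summation: the bound survives a step as the partial sums are `≤ 0` and `w` decreases.
  suffices habel : ∀ n, ∑ k ∈ Icc 1 n, w k * h k ≤ w n * ∑ k ∈ Icc 1 n, h k from
    (habel n).trans (mul_nonpos_of_nonneg_of_nonpos (hw0 n) (hh n))
  intro n
  induction n with
  | zero => simp
  | succ n ih =>
    have hmono : w n * ∑ k ∈ Icc 1 n, h k ≤ w (n + 1) * ∑ k ∈ Icc 1 n, h k := by
      rcases n.eq_zero_or_pos with rfl | hn
      · simp
      · exact mul_le_mul_of_nonpos_right (hw hn (Nat.le_succ_of_le hn) n.le_succ) (hh n)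
    rw [sum_Icc_succ_top (Nat.le_add_left 1 n), sum_Icc_succ_top (Nat.le_add_left 1 n)]
    linarith

theorem sum_Icc_mul_le_mul_sum_of_antitoneOn {w g : ℕ → ℝ} {C : ℝ}
    (hw : AntitoneOn w (Set.Ici 1)) (hw0 : ∀ k, 0 ≤ w k)
    (hg : ∀ m, ∑ k ∈ Icc 1 m, g k ≤ C * m) (n : ℕ) :
    ∑ k ∈ Icc 1 n, w k * g k ≤ C * ∑ k ∈ Icc 1 n, w k := by
  have h := sum_Icc_mul_nonpos_of_antitoneOn (h := fun k => g k - C) hw hw0 (fun m => by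
    simpa [sum_sub_distrib, mul_comm] using hg m) n
  simpa [mul_sub, sum_sub_distrib, mul_sum, mul_comm] using h

theorem exists_norm_sum_Icc_le_mul {E : Type*} [SeminormedAddCommGroup E]
    [NormedSpace ℝ E] {χ : ℝ} (hχ : χ ≤ 1) {f : ℕ → E} {a : E}
    (hf : Tendsto (fun n : ℕ => ‖(n : ℝ) ^ (-χ) • ∑ k ∈ Icc 1 n, (f k - a)‖) atTop (𝓝 0)) :
    ∃ C, ∀ n : ℕ, ‖∑ k ∈ Icc 1 n, f k‖ ≤ C * n := by
  obtain ⟨M, hM⟩ := hf.bddAbove_range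
  refine ⟨M + ‖a‖, fun n => ?_⟩
  rcases n.eq_zero_or_pos with rfl | hn
  · simp
  have hn1 : (1 : ℝ) ≤ n := by exact_mod_cast hn
  have hn0 : (0 : ℝ) < n := one_pos.trans_le hn1
  have hM0 : 0 ≤ M := (norm_nonneg _).trans (hM (Set.mem_range_self 0))
  have hdev : ‖∑ k ∈ Icc 1 n, (f k - a)‖ ≤ M * n := calc
    ‖∑ k ∈ Icc 1 n, (f k - a)‖
        = (n : ℝ) ^ χ * ‖(n : ℝ) ^ (-χ) • ∑ k ∈ Icc 1 n, (f k - a)‖ := by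
        rw [norm_smul, Real.norm_of_nonneg (by positivity), ← mul_assoc, ← Real.rpow_add hn0,
          add_neg_cancel, Real.rpow_zero, one_mul]
    _ ≤ n * M := by
        gcongr
        · exact Real.rpow_le_self_of_one_le hn1 hχ
        · exact hM (Set.mem_range_self n)
    _ = M * n := mul_comm _ _
  calc ‖∑ k ∈ Icc 1 n, f k‖ = ‖∑ k ∈ Icc 1 n, (f k - a) + (n : ℝ) • a‖ := by
        simp [sum_sub_distrib, Nat.cast_smul_eq_nsmul]
    _ ≤ M * n + n * ‖a‖ := by
        refine (norm_add_le _ _).trans ?_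
        rw [norm_smul, Real.norm_natCast]
        gcongr
    _ = (M + ‖a‖) * n := by ring

theorem stmt_2_general (d : ℕ) (χ : ℝ) (hχ : χ ∈ Set.Ioo (0 : ℝ) 1)
    (A : EuclideanSpace ℝ (Fin d) →L[ℝ] EuclideanSpace ℝ (Fin d))
    (Ab : ℕ → EuclideanSpace ℝ (Fin d) →L[ℝ] EuclideanSpace ℝ (Fin d))
    (hAbsym : ∀ (k : ℕ) (x y : EuclideanSpace ℝ (Fin d)), ⟪Ab k x, y⟫ = ⟪x, Ab k y⟫)
    (hAbpsd : ∀ (k : ℕ) (x : EuclideanSpace ℝ (Fin d)), 0 ≤ ⟪Ab k x, x⟫)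
    (hcoefA : Tendsto (fun n : ℕ => ‖(n : ℝ) ^ (-χ) • ∑ k ∈ Icc 1 n, (Ab k - A)‖)
      atTop (𝓝 0)) :
    ∃ K : ℝ, ∀ n : ℕ,
      (n : ℝ) ^ (-χ) * ∑ k ∈ Icc 1 n, (k : ℝ) ^ (χ - 1) * ‖Ab k‖ ≤ K := by
  obtain ⟨hχ0, hχ1⟩ := hχ
  obtain ⟨C, hC⟩ := exists_norm_sum_Icc_le_mul hχ1.le hcoefA
  have hC0 : 0 ≤ C := by simpa using (norm_nonneg _).trans (hC 1)
  set D := (Module.finrank ℝ (EuclideanSpace ℝ (Fin d)) : ℝ) * C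
  have hsum_norm : ∀ m : ℕ, ∑ k ∈ Icc 1 m, ‖Ab k‖ ≤ D * m := fun m => calc
    ∑ k ∈ Icc 1 m, ‖Ab k‖
        ≤ Module.finrank ℝ (EuclideanSpace ℝ (Fin d)) * ‖∑ k ∈ Icc 1 m, Ab k‖ :=
        ContinuousLinearMap.sum_norm_le_finrank_mul_norm_sum _ fun k _ =>
          (ContinuousLinearMap.isPositive_iff _).2 ⟨hAbsym k, hAbpsd k⟩
    _ ≤ D * m := by rw [mul_assoc]; gcongr; exact hC m
  have hw : AntitoneOn (fun k : ℕ => (k : ℝ) ^ (χ - 1)) (Set.Ici 1) := fun i hi j _ hij =>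
    Real.rpow_le_rpow_of_nonpos (Nat.cast_pos.2 hi) (by exact_mod_cast hij) (by linarith)
  refine ⟨D / χ, fun n => ?_⟩
  calc (n : ℝ) ^ (-χ) * ∑ k ∈ Icc 1 n, (k : ℝ) ^ (χ - 1) * ‖Ab k‖
      ≤ (n : ℝ) ^ (-χ) * (D * ((n : ℝ) ^ χ / χ)) := by
        gcongr
        calc ∑ k ∈ Icc 1 n, (k : ℝ) ^ (χ - 1) * ‖Ab k‖
            ≤ D * ∑ k ∈ Icc 1 n, (k : ℝ) ^ (χ - 1) :=
              sum_Icc_mul_le_mul_sum_of_antitoneOn hw (fun k => by positivity) hsum_norm n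
          _ ≤ D * ((n : ℝ) ^ χ / χ) := by gcongr; exact sum_Icc_rpow_sub_one_le hχ0 hχ1.le n
    _ = D / χ * (((n : ℝ) ^ χ)⁻¹ * (n : ℝ) ^ χ) := by rw [Real.rpow_neg n.cast_nonneg]; ring
    -- not `= D / χ`: at `n = 0` both powers are `0` in Lean
    _ ≤ D / χ := mul_le_of_le_one_right (by positivity) inv_mul_le_one

/-- Lemma 1: if `‖n^{-χ} Σ_{k=1}^n (Ā_k − A)‖ → 0`, then
`n^{-χ} Σ_{k=1}^n k^{χ−1}‖Ā_k‖` is bounded in `n`. -/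
theorem stmt_2 (d : ℕ) (hd : 0 < d) (χ : ℝ) (hχ : χ ∈ Set.Ioo (0 : ℝ) 1)
    (A : EuclideanSpace ℝ (Fin d) →L[ℝ] EuclideanSpace ℝ (Fin d))
    (hAsym : ∀ x y : EuclideanSpace ℝ (Fin d), ⟪A x, y⟫ = ⟪x, A y⟫)
    (hApos : ∀ x : EuclideanSpace ℝ (Fin d), x ≠ 0 → 0 < ⟪A x, x⟫)
    (Ab : ℕ → EuclideanSpace ℝ (Fin d) →L[ℝ] EuclideanSpace ℝ (Fin d))
    (hAbsym : ∀ (k : ℕ) (x y : EuclideanSpace ℝ (Fin d)), ⟪Ab k x, y⟫ = ⟪x, Ab k y⟫)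
    (hAbpsd : ∀ (k : ℕ) (x : EuclideanSpace ℝ (Fin d)), 0 ≤ ⟪Ab k x, x⟫)
    (hcoefA : Tendsto (fun n : ℕ => ‖(n : ℝ) ^ (-χ) • ∑ k ∈ Icc 1 n, (Ab k - A)‖)
      atTop (𝓝 0)) :
    ∃ K : ℝ, ∀ n : ℕ,
      (n : ℝ) ^ (-χ) * ∑ k ∈ Icc 1 n, (k : ℝ) ^ (χ - 1) * ‖Ab k‖ ≤ K :=
  stmt_2_general d χ hχ A Ab hAbsym hAbpsd hcoefA
end

section
/- Let χ ∈ (0,1), θ ∈ (χ,1], η̄ > 0, and {η_l} real numbers with 0 ≤ η_l ≤ η̄ l^{-θ}. Let A be a symmetric positive-definite real d×d matrix. Then ‖∏_{l=1}^{n−1} (I − l^{-χ}A + η_l I)‖ → 0 as n → ∞, where the product is taken in decreasing order of index (∏_{l=p}^{q} B_l = B_q B_{q−1} ⋯ B_p). -/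
open Filter Finset
open scoped RealInnerProductSpace Topology

/-- `prodDesc B p q = B_q * B_{q-1} * ⋯ * B_p` (decreasing order of index);
an empty product (`p > q`) is the identity. -/
noncomputable def prodDesc {d : ℕ}
    (B : ℕ → EuclideanSpace ℝ (Fin d) →L[ℝ] EuclideanSpace ℝ (Fin d)) (p q : ℕ) :
    EuclideanSpace ℝ (Fin d) →L[ℝ] EuclideanSpace ℝ (Fin d) :=
  ((List.range (q + 1 - p)).map fun i => B (q - i)).prod

/-!
Positive definiteness on a finite-dimensional space gives `μ > 0` with `μ ‖x‖² ≤ ⟪A x, x⟫`, hence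
`‖I - t A‖ ≤ 1 - t μ / 2` for small `t ≥ 0`. As `θ > χ`, `η_l = o(l^{-χ})`, so eventually every
factor has norm at most `1 - (μ / 4) l^{-χ} ≤ exp (-(μ / 4) l^{-χ})`. Since `χ ≤ 1` the series
`∑ l^{-χ}` diverges, and the product of the norms of the factors tends to `0`.
-/

theorem eventually_le_mul_rpow_neg {χ θ η' c : ℝ} {η : ℕ → ℝ} (hθ : χ < θ) (hc : 0 < c)
    (hη : ∀ l : ℕ, 1 ≤ l → η l ≤ η' * (l : ℝ) ^ (-θ)) :
    ∀ᶠ l : ℕ in atTop, η l ≤ c * (l : ℝ) ^ (-χ) := by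
  have hsmall : Tendsto (fun l : ℕ => η' * (l : ℝ) ^ (χ - θ)) atTop (𝓝 0) := by
    simpa using
      ((tendsto_rpow_neg_atTop (sub_pos.2 hθ)).comp tendsto_natCast_atTop_atTop).const_mul η'
  filter_upwards [hsmall.eventually_le_const hc, eventually_ge_atTop 1] with l hl hl₁
  have hl₀ : (0 : ℝ) < l := by exact_mod_cast hl₁
  calc η l ≤ η' * (l : ℝ) ^ (-θ) := hη l hl₁
    _ = η' * (l : ℝ) ^ (χ - θ) * (l : ℝ) ^ (-χ) := by
      rw [mul_assoc, ← Real.rpow_add hl₀]; ring_nf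
    _ ≤ c * (l : ℝ) ^ (-χ) := by gcongr

section Contraction

variable {E : Type*} [NormedAddCommGroup E] [InnerProductSpace ℝ E]

theorem exists_pos_mul_norm_sq_le_inner [FiniteDimensional ℝ E] (A : E →L[ℝ] E)
    (hA : ∀ x : E, x ≠ 0 → 0 < ⟪A x, x⟫) :
    ∃ μ : ℝ, 0 < μ ∧ ∀ x : E, μ * ‖x‖ ^ 2 ≤ ⟪A x, x⟫ := by
  rcases subsingleton_or_nontrivial E with hE | hE
  · exact ⟨1, one_pos, fun x => by simp [Subsingleton.elim x 0]⟩
  obtain ⟨x₀, hx₀, hmin⟩ := (isCompact_sphere (0 : E) 1).exists_isMinOn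
    (NormedSpace.sphere_nonempty.2 zero_le_one)
    (show Continuous fun x : E => ⟪A x, x⟫ by fun_prop).continuousOn
  refine ⟨⟪A x₀, x₀⟫, hA x₀ (ne_zero_of_mem_unit_sphere ⟨x₀, hx₀⟩), fun x => ?_⟩
  rcases eq_or_ne x 0 with rfl | hx
  · simp
  have hx' : 0 < ‖x‖ := norm_pos_iff.2 hx
  have hmin_x := isMinOn_iff.1 hmin _ (show ‖x‖⁻¹ • x ∈ Metric.sphere (0 : E) 1 by
    simp [norm_smul, hx'.ne'])
  rw [map_smul, real_inner_smul_left, real_inner_smul_right] at hmin_x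
  calc ⟪A x₀, x₀⟫ * ‖x‖ ^ 2 ≤ ‖x‖⁻¹ * (‖x‖⁻¹ * ⟪A x, x⟫) * ‖x‖ ^ 2 := by gcongr
    _ = ⟪A x, x⟫ := by field_simp

theorem norm_one_sub_smul_le {A : E →L[ℝ] E} {μ t : ℝ}
    (hμ : ∀ x : E, μ * ‖x‖ ^ 2 ≤ ⟪A x, x⟫) (ht : 0 ≤ t) (htA : t * ‖A‖ ^ 2 ≤ μ)
    (htμ : t * μ ≤ 2) :
    ‖1 - t • A‖ ≤ 1 - t * μ / 2 := by
  have hbound : 0 ≤ 1 - t * μ / 2 := by linarith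
  refine ContinuousLinearMap.opNorm_le_bound _ hbound fun x => ?_
  have hAx : ‖A x‖ ^ 2 ≤ ‖A‖ ^ 2 * ‖x‖ ^ 2 := by
    rw [← mul_pow]; exact pow_le_pow_left₀ (norm_nonneg _) (A.le_opNorm x) 2
  have hexpand : ‖x - t • A x‖ ^ 2 = ‖x‖ ^ 2 - 2 * t * ⟪A x, x⟫ + t ^ 2 * ‖A x‖ ^ 2 := by
    rw [norm_sub_sq_real, real_inner_smul_right, norm_smul, Real.norm_eq_abs, abs_of_nonneg ht,
      real_inner_comm]
    ring
  -- `t ^ 2 ‖A x‖ ^ 2 ≤ t μ ‖x‖ ^ 2`, so the square is at most `(1 - t μ) ‖x‖ ^ 2`.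
  have hsq : ‖x - t • A x‖ ^ 2 ≤ ((1 - t * μ / 2) * ‖x‖) ^ 2 := by
    rw [hexpand]
    nlinarith [mul_le_mul_of_nonneg_left (hμ x) ht, mul_le_mul_of_nonneg_right htA (sq_nonneg ‖x‖),
      mul_le_mul_of_nonneg_left hAx (sq_nonneg t), sq_nonneg (t * μ * ‖x‖)]
  simpa using le_of_sq_le_sq hsq (mul_nonneg hbound (norm_nonneg x))

theorem norm_one_sub_smul_add_smul_one_le_exp {A : E →L[ℝ] E} {μ t η : ℝ}
    (hμ : ∀ x : E, μ * ‖x‖ ^ 2 ≤ ⟪A x, x⟫) (ht : 0 ≤ t) (htA : t * ‖A‖ ^ 2 ≤ μ)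
    (htμ : t * μ ≤ 2) (hη₀ : 0 ≤ η) (hη : η ≤ μ / 4 * t) :
    ‖1 - t • A + η • (1 : E →L[ℝ] E)‖ ≤ Real.exp (-(μ / 4 * t)) :=
  calc ‖1 - t • A + η • (1 : E →L[ℝ] E)‖ ≤ ‖1 - t • A‖ + ‖η • (1 : E →L[ℝ] E)‖ := norm_add_le _ _
    _ ≤ (1 - t * μ / 2) + η := by
      gcongr
      · exact norm_one_sub_smul_le hμ ht htA htμ
      · rw [norm_smul, Real.norm_of_nonneg hη₀]
        exact mul_le_of_le_one_right hη₀ ContinuousLinearMap.norm_id_le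
    _ ≤ 1 - μ / 4 * t := by linarith
    _ ≤ Real.exp (-(μ / 4 * t)) := by linarith [Real.add_one_le_exp (-(μ / 4 * t))]

theorem eventually_norm_one_sub_rpow_smul_add_le_exp {A : E →L[ℝ] E} {μ χ θ η' : ℝ} {η : ℕ → ℝ}
    (hμ : ∀ x : E, μ * ‖x‖ ^ 2 ≤ ⟪A x, x⟫) (hμ₀ : 0 < μ) (hχ : 0 < χ) (hθ : χ < θ)
    (hη : ∀ l : ℕ, 1 ≤ l → 0 ≤ η l ∧ η l ≤ η' * (l : ℝ) ^ (-θ)) :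
    ∀ᶠ l : ℕ in atTop,
      ‖1 - (l : ℝ) ^ (-χ) • A + η l • (1 : E →L[ℝ] E)‖ ≤ Real.exp (-(μ / 4 * (l : ℝ) ^ (-χ))) := by
  have ht : Tendsto (fun l : ℕ => (l : ℝ) ^ (-χ)) atTop (𝓝 0) :=
    (tendsto_rpow_neg_atTop hχ).comp tendsto_natCast_atTop_atTop
  filter_upwards [(ht.mul_const (‖A‖ ^ 2)).eventually_le_const (by simpa using hμ₀),
    (ht.mul_const μ).eventually_le_const (by simp : (0 : ℝ) * μ < 2),
    eventually_le_mul_rpow_neg hθ (by positivity : 0 < μ / 4) fun l hl => (hη l hl).2,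
    eventually_ge_atTop 1] with l htA htμ hηl hl₁
  exact norm_one_sub_smul_add_smul_one_le_exp hμ (by positivity) htA htμ (hη l hl₁).1 hηl

end Contraction

theorem tendsto_prod_range_zero_of_le_exp {b a : ℕ → ℝ} (hb : ∀ l, 0 ≤ b l) (ha₀ : ∀ l, 0 ≤ a l)
    (ha : ¬Summable a) (hba : ∀ᶠ l in atTop, b l ≤ Real.exp (-a l)) :
    Tendsto (fun m => ∏ i ∈ range m, b i) atTop (𝓝 0) := by
  obtain ⟨N, hN⟩ := eventually_atTop.1 hba
  set S : ℕ → ℝ := fun m => ∑ i ∈ range m, a i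
  have hbound : ∀ m ≥ N, ∏ i ∈ range m, b i ≤ (∏ i ∈ range N, b i) * Real.exp (-(S m - S N)) := by
    intro m hm
    rw [← prod_range_mul_prod_Ico b hm, ← sum_Ico_eq_sub a hm, ← sum_neg_distrib, Real.exp_sum]
    exact mul_le_mul_of_nonneg_left
      (prod_le_prod (fun i _ => hb i) fun i hi => hN i (mem_Ico.1 hi).1)
      (prod_nonneg fun i _ => hb i)
  have hS : Tendsto (fun m => S m - S N) atTop atTop :=
    tendsto_atTop_add_const_right _ _ ((not_summable_iff_tendsto_nat_atTop_of_nonneg ha₀).1 ha)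
  have hlim : Tendsto (fun m => (∏ i ∈ range N, b i) * Real.exp (-(S m - S N))) atTop (𝓝 0) := by
    simpa using (Real.tendsto_exp_atBot.comp (tendsto_neg_atTop_atBot.comp hS)).const_mul _
  exact tendsto_of_tendsto_of_tendsto_of_le_of_le' tendsto_const_nhds hlim
    (Eventually.of_forall fun m => prod_nonneg fun i _ => hb i) (eventually_atTop.2 ⟨N, hbound⟩)

theorem prodDesc_one_succ {d : ℕ}
    (B : ℕ → EuclideanSpace ℝ (Fin d) →L[ℝ] EuclideanSpace ℝ (Fin d)) (q : ℕ) :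
    prodDesc B 1 (q + 1) = B (q + 1) * prodDesc B 1 q := by
  simp only [prodDesc, Nat.add_sub_cancel]
  rw [List.range_succ_eq_map, List.map_cons, List.prod_cons, Nat.sub_zero, List.map_map]
  congr 2
  refine List.map_congr_left fun i _ => ?_
  simp [Nat.succ_sub_succ]

theorem norm_prodDesc_one_le {d : ℕ}
    (B : ℕ → EuclideanSpace ℝ (Fin d) →L[ℝ] EuclideanSpace ℝ (Fin d)) (q : ℕ) :
    ‖prodDesc B 1 q‖ ≤ ∏ i ∈ range q, ‖B (i + 1)‖ := by
  induction q with
  | zero => exact ContinuousLinearMap.norm_id_le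
  | succ q ih =>
    rw [prodDesc_one_succ, prod_range_succ, mul_comm (∏ i ∈ range q, _)]
    exact (norm_mul_le _ _).trans (by gcongr)

theorem tendsto_norm_prodDesc_one_zero {d : ℕ}
    (B : ℕ → EuclideanSpace ℝ (Fin d) →L[ℝ] EuclideanSpace ℝ (Fin d)) {a : ℕ → ℝ}
    (ha₀ : ∀ l, 0 ≤ a l) (ha : ¬Summable a) (hB : ∀ᶠ l in atTop, ‖B l‖ ≤ Real.exp (-a l)) :
    Tendsto (fun m => ‖prodDesc B 1 m‖) atTop (𝓝 0) :=
  squeeze_zero (fun _ => norm_nonneg _) (norm_prodDesc_one_le B)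
    (tendsto_prod_range_zero_of_le_exp (fun _ => norm_nonneg _) (fun l => ha₀ (l + 1))
      (by rwa [summable_nat_add_iff 1]) ((tendsto_add_atTop_nat 1).eventually hB))

theorem stmt_6_general (d : ℕ) (χ θ η' : ℝ) (hχ : χ ∈ Set.Ioo (0 : ℝ) 1)
    (hθ : θ ∈ Set.Ioc χ 1)
    (η : ℕ → ℝ) (hη : ∀ l : ℕ, 1 ≤ l → 0 ≤ η l ∧ η l ≤ η' * (l : ℝ) ^ (-θ))
    (A : EuclideanSpace ℝ (Fin d) →L[ℝ] EuclideanSpace ℝ (Fin d))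
    (hApos : ∀ x : EuclideanSpace ℝ (Fin d), x ≠ 0 → 0 < ⟪A x, x⟫) :
    Tendsto (fun n : ℕ =>
        ‖prodDesc (fun l => 1 - (l : ℝ) ^ (-χ) • A + η l • 1) 1 (n - 1)‖)
      atTop (𝓝 0) := by
  obtain ⟨μ, hμ₀, hμ⟩ := exists_pos_mul_norm_sq_le_inner A hApos
  have hdiv : ¬Summable fun l : ℕ => μ / 4 * (l : ℝ) ^ (-χ) := by
    rw [summable_mul_left_iff (by positivity), Real.summable_nat_rpow]
    linarith [hχ.2]
  exact (tendsto_norm_prodDesc_one_zero _ (fun l => by positivity) hdiv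
    (eventually_norm_one_sub_rpow_smul_add_le_exp hμ hμ₀ hχ.1 hθ.1 hη)).comp
    (tendsto_sub_atTop_nat 1)

/-- Lemma 2 i): `‖∏_{l=1}^{n−1} (I − l^{-χ}A + η_l I)‖ → 0` as `n → ∞`. -/
theorem stmt_6 (d : ℕ) (hd : 0 < d) (χ θ η' : ℝ) (hχ : χ ∈ Set.Ioo (0 : ℝ) 1)
    (hθ : θ ∈ Set.Ioc χ 1) (hη' : 0 < η')
    (η : ℕ → ℝ) (hη : ∀ l : ℕ, 1 ≤ l → 0 ≤ η l ∧ η l ≤ η' * (l : ℝ) ^ (-θ))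
    (A : EuclideanSpace ℝ (Fin d) →L[ℝ] EuclideanSpace ℝ (Fin d))
    (hAsym : ∀ x y : EuclideanSpace ℝ (Fin d), ⟪A x, y⟫ = ⟪x, A y⟫)
    (hApos : ∀ x : EuclideanSpace ℝ (Fin d), x ≠ 0 → 0 < ⟪A x, x⟫) :
    Tendsto (fun n : ℕ =>
        ‖prodDesc (fun l => 1 - (l : ℝ) ^ (-χ) • A + η l • 1) 1 (n - 1)‖)
      atTop (𝓝 0) :=
  stmt_6_general d χ θ η' hχ hθ η hη A hApos
end

section
/- Let χ ∈ (0,1) and a > 0, and define n_k = ⌊(ak)^{1/(1−χ)}⌋ and the index block I_k = {n_k, n_k+1, …, n_{k+1}−1} for k ≥ 0. If {Y_l} is a sequence of real d×d matrices with ‖n^{-χ} Σ_{l=1}^n Y_l‖ → 0 as n → ∞, then ‖Σ_{l∈I_k} l^{-χ} Y_l‖ → 0 as k → ∞. -/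
open Filter Finset Asymptotics
open scoped Topology

/-!
With `S n = ∑_{l=1}^n Y l`, the hypothesis says `‖S j‖ ≤ ε j^χ` for large `j`. Summation by parts
turns the block sum over `[n, m)` into two boundary terms `m^{-χ} S m`, `n^{-χ} S n` of size `ε`
plus `∑ (j^{-χ} - (j+1)^{-χ}) S j`; its weights are nonnegative and telescope to at most `n^{-χ}`,
so it is at most `ε (m/n)^χ`. For the blocks `n_k = ⌊(ak)^{1/(1-χ)}⌋` the ratio `n_{k+1}/n_k`
stays bounded, so the block sums tend to `0`.
-/

theorem Finset.sum_Ico_smul_sub_eq {R M : Type*} [Ring R] [AddCommGroup M] [Module R M]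
    (c : ℕ → R) (S : ℕ → M) {n m : ℕ} (hnm : n ≤ m) :
    ∑ j ∈ Ico n m, c (j + 1) • (S (j + 1) - S j)
      = c m • S m - c n • S n + ∑ j ∈ Ico n m, (c j - c (j + 1)) • S j := by
  induction m, hnm using Nat.le_induction with
  | base => simp
  | succ m hnm ih =>
    rw [sum_Ico_succ_top hnm, sum_Ico_succ_top hnm, ih]
    simp only [smul_sub, sub_smul]
    abel

section BlockSums

variable {E : Type*} [NormedAddCommGroup E] [NormedSpace ℝ E] {χ : ℝ}

lemma norm_le_mul_rpow_of_norm_rpow_neg_smul_le {ε : ℝ} {x : E} {j : ℕ} (hj : 0 < j)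
    (h : ‖(j : ℝ) ^ (-χ) • x‖ ≤ ε) : ‖x‖ ≤ ε * (j : ℝ) ^ χ := by
  have hpos : 0 < (j : ℝ) ^ χ := Real.rpow_pos_of_pos (Nat.cast_pos.2 hj) χ
  rwa [norm_smul, Real.rpow_neg (Nat.cast_nonneg j), norm_inv, Real.norm_of_nonneg hpos.le,
    inv_mul_le_iff₀ hpos, mul_comm] at h

lemma norm_sum_Ico_rpow_neg_smul_sub_le {ε : ℝ} (hχ : 0 ≤ χ) (S : ℕ → E) {n m : ℕ}
    (hn : 0 < n) (hnm : n ≤ m) (hS : ∀ j ∈ Icc n m, ‖(j : ℝ) ^ (-χ) • S j‖ ≤ ε) :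
    ‖∑ j ∈ Ico n m, ((j + 1 : ℕ) : ℝ) ^ (-χ) • (S (j + 1) - S j)‖
      ≤ (2 + ((m : ℝ) / n) ^ χ) * ε := by
  set c : ℕ → ℝ := fun j => (j : ℝ) ^ (-χ)
  have hc_anti : ∀ j, 0 < j → c (j + 1) ≤ c j := fun j hj =>
    Real.rpow_le_rpow_of_nonpos (Nat.cast_pos.2 hj) (Nat.cast_le.2 j.le_succ) (by linarith)
  have hε : 0 ≤ ε := (norm_nonneg _).trans (hS n (left_mem_Icc.2 hnm))
  have hSm : ∀ j ∈ Ico n m, ‖S j‖ ≤ ε * (m : ℝ) ^ χ := fun j hj => by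
    obtain ⟨hnj, hjm⟩ := mem_Ico.1 hj
    calc ‖S j‖ ≤ ε * (j : ℝ) ^ χ :=
          norm_le_mul_rpow_of_norm_rpow_neg_smul_le (by omega) (hS j (mem_Icc.2 ⟨hnj, hjm.le⟩))
      _ ≤ ε * (m : ℝ) ^ χ := by gcongr
  have hmiddle : ‖∑ j ∈ Ico n m, (c j - c (j + 1)) • S j‖ ≤ ((m : ℝ) / n) ^ χ * ε :=
    calc ‖∑ j ∈ Ico n m, (c j - c (j + 1)) • S j‖
        ≤ ∑ j ∈ Ico n m, (c j - c (j + 1)) * (ε * (m : ℝ) ^ χ) := by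
          refine norm_sum_le_of_le _ fun j hj => ?_
          have hcj : 0 ≤ c j - c (j + 1) := sub_nonneg.2 (hc_anti j (by grind))
          rw [norm_smul, Real.norm_of_nonneg hcj]
          exact mul_le_mul_of_nonneg_left (hSm j hj) hcj
      _ = (c n - c m) * (ε * (m : ℝ) ^ χ) := by
          rw [← sum_mul, ← neg_sub (c m), ← sum_Ico_sub c hnm, ← sum_neg_distrib]
          simp only [neg_sub]
      _ ≤ c n * (ε * (m : ℝ) ^ χ) := by
          have : 0 ≤ c m := Real.rpow_nonneg (Nat.cast_nonneg m) _
          gcongr; linarith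
      _ = ((m : ℝ) / n) ^ χ * ε := by
          simp only [c]
          rw [Real.div_rpow (Nat.cast_nonneg m) (Nat.cast_nonneg n), Real.rpow_neg (Nat.cast_nonneg n)]
          ring
  rw [sum_Ico_smul_sub_eq c S hnm]
  calc ‖c m • S m - c n • S n + ∑ j ∈ Ico n m, (c j - c (j + 1)) • S j‖
      ≤ ‖c m • S m‖ + ‖c n • S n‖ + ‖∑ j ∈ Ico n m, (c j - c (j + 1)) • S j‖ :=
        (norm_add_le _ _).trans (by gcongr; exact norm_sub_le _ _)
    _ ≤ ε + ε + ((m : ℝ) / n) ^ χ * ε := by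
        gcongr
        · exact hS m (right_mem_Icc.2 hnm)
        · exact hS n (left_mem_Icc.2 hnm)
    _ = (2 + ((m : ℝ) / n) ^ χ) * ε := by ring

lemma sum_Ico_rpow_neg_smul_eq (Y : ℕ → E) {n m : ℕ} (hn : 0 < n) (hnm : n ≤ m) :
    ∑ l ∈ Ico n m, (l : ℝ) ^ (-χ) • Y l
      = ∑ j ∈ Ico (n - 1) (m - 1), ((j + 1 : ℕ) : ℝ) ^ (-χ)
          • (∑ l ∈ Icc 1 (j + 1), Y l - ∑ l ∈ Icc 1 j, Y l) := by
  simp only [sum_Icc_succ_top (Nat.le_add_left 1 _), add_sub_cancel_left]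
  rw [sum_Ico_add' (fun l : ℕ => (l : ℝ) ^ (-χ) • Y l), Nat.sub_add_cancel hn,
    Nat.sub_add_cancel (hn.trans_le hnm)]

theorem tendsto_norm_sum_Ico_rpow_neg_smul (hχ : 0 ≤ χ) (Y : ℕ → E)
    (hY : Tendsto (fun n : ℕ => ‖(n : ℝ) ^ (-χ) • ∑ l ∈ Icc 1 n, Y l‖) atTop (𝓝 0))
    {u v : ℕ → ℕ} (hu : Tendsto u atTop atTop)
    (hvu : (fun k => (v k : ℝ)) =O[atTop] fun k => (u k : ℝ)) :
    Tendsto (fun k => ‖∑ l ∈ Ico (u k) (v k), (l : ℝ) ^ (-χ) • Y l‖) atTop (𝓝 0) := by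
  obtain ⟨C, hC, hvuC⟩ := hvu.exists_pos
  refine NormedAddGroup.tendsto_nhds_zero.2 fun ε hε => ?_
  set K := 3 + (2 * C) ^ χ
  have hK : 0 < K := by positivity
  obtain ⟨N, hN⟩ := eventually_atTop.1 (NormedAddGroup.tendsto_nhds_zero.1 hY (ε / K)
    (div_pos hε hK))
  filter_upwards [hvuC.bound, hu.eventually_ge_atTop (N + 2)] with k hvk huk
  simp only [Real.norm_natCast, norm_norm] at hvk hN ⊢
  rcases le_total (v k) (u k) with hvu | huv
  · simpa [Ico_eq_empty_of_le hvu] using hε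
  have hratio : ((v k - 1 : ℕ) : ℝ) / (u k - 1 : ℕ) ≤ 2 * C := by
    have hu2 : (2 : ℝ) ≤ u k := by exact_mod_cast (by omega : 2 ≤ u k)
    rw [div_le_iff₀ (by exact_mod_cast (by omega : 0 < u k - 1)), Nat.cast_sub (by omega),
      Nat.cast_sub (by omega)]
    push_cast
    nlinarith
  rw [sum_Ico_rpow_neg_smul_eq Y (by omega) huv]
  calc _ ≤ (2 + (((v k - 1 : ℕ) : ℝ) / (u k - 1 : ℕ)) ^ χ) * (ε / K) :=
        norm_sum_Ico_rpow_neg_smul_sub_le hχ _ (by omega) (by omega)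
          fun j hj => (hN j (by grind)).le
    _ ≤ (2 + (2 * C) ^ χ) * (ε / K) := by gcongr
    _ < K * (ε / K) := by gcongr; linarith
    _ = ε := mul_div_cancel₀ ε hK.ne'

end BlockSums

section FloorBlocks

variable {a p : ℝ}

lemma tendsto_natFloor_mul_rpow_atTop (ha : 0 < a) (hp : 0 < p) :
    Tendsto (fun k : ℕ => ⌊(a * k) ^ p⌋₊) atTop atTop :=
  tendsto_nat_floor_atTop.comp <| (tendsto_rpow_atTop hp).comp <|
    tendsto_natCast_atTop_atTop.const_mul_atTop ha

lemma isBigO_natFloor_mul_add_one_rpow (ha : 0 < a) (hp : 0 < p) :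
    (fun k : ℕ => (⌊(a * (k + 1)) ^ p⌋₊ : ℝ)) =O[atTop] fun k : ℕ => (⌊(a * k) ^ p⌋₊ : ℝ) := by
  refine IsBigO.of_bound (2 ^ (p + 1)) ?_
  filter_upwards [eventually_ge_atTop 1,
    (tendsto_natFloor_mul_rpow_atTop ha hp).eventually_ge_atTop 1] with k hk hnk
  simp only [Real.norm_natCast]
  have hk' : (1 : ℝ) ≤ k := by exact_mod_cast hk
  have hnk' : (1 : ℝ) ≤ ⌊(a * k) ^ p⌋₊ := by exact_mod_cast hnk
  calc (⌊(a * (k + 1)) ^ p⌋₊ : ℝ) ≤ (a * (k + 1)) ^ p := Nat.floor_le (by positivity)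
    _ ≤ (2 * (a * k)) ^ p := by gcongr ?_ ^ p; nlinarith
    _ = 2 ^ p * (a * k) ^ p := Real.mul_rpow zero_le_two (by positivity)
    _ ≤ 2 ^ p * (⌊(a * k) ^ p⌋₊ + 1) := by gcongr; exact (Nat.lt_floor_add_one _).le
    _ ≤ 2 ^ (p + 1) * ⌊(a * k) ^ p⌋₊ := by
        rw [Real.rpow_add_one two_ne_zero, mul_assoc]; gcongr; linarith

end FloorBlocks

theorem stmt_9_general (d : ℕ) (χ a : ℝ) (hχ : χ ∈ Set.Ioo (0 : ℝ) 1) (ha : 0 < a)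
    (Y : ℕ → EuclideanSpace ℝ (Fin d) →L[ℝ] EuclideanSpace ℝ (Fin d))
    (hY : Tendsto (fun n : ℕ => ‖(n : ℝ) ^ (-χ) • ∑ l ∈ Icc 1 n, Y l‖) atTop (𝓝 0)) :
    Tendsto (fun k : ℕ =>
        ‖∑ l ∈ Ico (⌊(a * k) ^ (1 / (1 - χ))⌋₊) (⌊(a * (k + 1)) ^ (1 / (1 - χ))⌋₊),
          (l : ℝ) ^ (-χ) • Y l‖)
      atTop (𝓝 0) := by
  have hp : 0 < 1 / (1 - χ) := one_div_pos.2 (sub_pos.2 hχ.2)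
  exact tendsto_norm_sum_Ico_rpow_neg_smul hχ.1.le Y hY (tendsto_natFloor_mul_rpow_atTop ha hp)
    (isBigO_natFloor_mul_add_one_rpow ha hp)

/-- Lemma 2 iii): with blocks `I_k = {n_k, …, n_{k+1}−1}`, `n_k = ⌊(ak)^{1/(1−χ)}⌋`,
if `‖n^{-χ} Σ_{l=1}^n Y_l‖ → 0` then `‖Σ_{l∈I_k} l^{-χ} Y_l‖ → 0`. -/
theorem stmt_9 (d : ℕ) (hd : 0 < d) (χ a : ℝ) (hχ : χ ∈ Set.Ioo (0 : ℝ) 1) (ha : 0 < a)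
    (Y : ℕ → EuclideanSpace ℝ (Fin d) →L[ℝ] EuclideanSpace ℝ (Fin d))
    (hY : Tendsto (fun n : ℕ => ‖(n : ℝ) ^ (-χ) • ∑ l ∈ Icc 1 n, Y l‖) atTop (𝓝 0)) :
    Tendsto (fun k : ℕ =>
        ‖∑ l ∈ Ico (⌊(a * k) ^ (1 / (1 - χ))⌋₊) (⌊(a * (k + 1)) ^ (1 / (1 - χ))⌋₊),
          (l : ℝ) ^ (-χ) • Y l‖)
      atTop (𝓝 0) :=
  stmt_9_general d χ a hχ ha Y hY
end

section
/- Let m be a positive integer and {M_k, k = 1,2,3,…} a sequence of symmetric positive-semidefinite real m×m matrices. Then Σ_{k=1}^{j} ‖M_k‖_F ≤ √m ‖Σ_{k=1}^{j} M_k‖_F for every j ≥ 1, where ‖·‖_F denotes the Frobenius norm. -/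
/-!
For a positive-semidefinite `A` one has `‖A‖_F ≤ tr A`, because every entry satisfies
`A i j ^ 2 ≤ A i i * A j j` and the right-hand sides sum to `(tr A) ^ 2`; for any matrix,
`tr A ≤ √m ‖A‖_F` by Cauchy–Schwarz on the diagonal. Summing the first bound over `k` and
applying the second to `Σ M_k`, whose trace is `Σ tr M_k`, gives the claim.
-/

open Finset

/-- The Frobenius norm of a real `m × m` matrix. -/
noncomputable def frobNorm {m : ℕ} (A : Matrix (Fin m) (Fin m) ℝ) : ℝ :=
  Real.sqrt (∑ n : Fin m, ∑ o : Fin m, (A n o) ^ 2)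

namespace Matrix

variable {n : Type*}

theorem PosSemidef.sq_apply_le_mul_diag {A : Matrix n n ℝ} (hA : A.PosSemidef) (i j : n) :
    A i j ^ 2 ≤ A i i * A j j := by
  -- the principal `2 × 2` submatrix on rows and columns `i, j` has nonnegative determinant
  have hdet := (hA.submatrix ![i, j]).det_nonneg
  have hsymm : A j i = A i j := hA.1.apply i j
  rw [det_fin_two] at hdet
  simp only [submatrix_apply, cons_val_zero, cons_val_one] at hdet
  rw [hsymm, ← sq] at hdet
  linarith

variable [Fintype n]

theorem PosSemidef.sum_sq_apply_le_trace_sq {A : Matrix n n ℝ} (hA : A.PosSemidef) :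
    ∑ i, ∑ j, A i j ^ 2 ≤ A.trace ^ 2 := by
  rw [trace, sq, sum_mul_sum]
  exact sum_le_sum fun i _ ↦ sum_le_sum fun j _ ↦ hA.sq_apply_le_mul_diag i j

theorem trace_sq_le_card_mul_sum_sq (A : Matrix n n ℝ) :
    A.trace ^ 2 ≤ Fintype.card n * ∑ i, ∑ j, A i j ^ 2 := by
  calc A.trace ^ 2 ≤ Fintype.card n * ∑ i, A i i ^ 2 := sq_sum_le_card_mul_sum_sq
    _ ≤ Fintype.card n * ∑ i, ∑ j, A i j ^ 2 := by
      gcongr with i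
      exact single_le_sum (f := fun j ↦ A i j ^ 2) (fun j _ ↦ sq_nonneg _) (mem_univ i)

end Matrix

theorem frobNorm_le_trace {m : ℕ} {A : Matrix (Fin m) (Fin m) ℝ} (hA : A.PosSemidef) :
    frobNorm A ≤ A.trace :=
  (Real.sqrt_le_left hA.trace_nonneg).mpr hA.sum_sq_apply_le_trace_sq

theorem trace_le_sqrt_mul_frobNorm {m : ℕ} (A : Matrix (Fin m) (Fin m) ℝ) :
    A.trace ≤ Real.sqrt m * frobNorm A := by
  have h := A.trace_sq_le_card_mul_sum_sq
  rw [Fintype.card_fin] at h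
  calc A.trace ≤ |A.trace| := le_abs_self _
    _ ≤ Real.sqrt (m * ∑ i, ∑ j, A i j ^ 2) := Real.abs_le_sqrt h
    _ = Real.sqrt m * frobNorm A := Real.sqrt_mul (Nat.cast_nonneg m) _

theorem stmt_12_general (m : ℕ) (M : ℕ → Matrix (Fin m) (Fin m) ℝ)
    (hM : ∀ k : ℕ, 1 ≤ k → (M k).PosSemidef) :
    ∀ j : ℕ, 1 ≤ j →
      ∑ k ∈ Icc 1 j, frobNorm (M k) ≤ Real.sqrt m * frobNorm (∑ k ∈ Icc 1 j, M k) := by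
  intro j _
  calc ∑ k ∈ Icc 1 j, frobNorm (M k)
      ≤ ∑ k ∈ Icc 1 j, (M k).trace :=
        sum_le_sum fun k hk ↦ frobNorm_le_trace (hM k (mem_Icc.mp hk).1)
    _ = (∑ k ∈ Icc 1 j, M k).trace := (Matrix.trace_sum _ _).symm
    _ ≤ Real.sqrt m * frobNorm (∑ k ∈ Icc 1 j, M k) := trace_le_sqrt_mul_frobNorm _

/-- Lemma 3: for symmetric positive-semidefinite matrices `M_k`,
`Σ_{k=1}^j ‖M_k‖_F ≤ √m ‖Σ_{k=1}^j M_k‖_F`. -/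
theorem stmt_12 (m : ℕ) (hm : 0 < m) (M : ℕ → Matrix (Fin m) (Fin m) ℝ)
    (hM : ∀ k : ℕ, 1 ≤ k → (M k).PosSemidef) :
    ∀ j : ℕ, 1 ≤ j →
      ∑ k ∈ Icc 1 j, frobNorm (M k) ≤ Real.sqrt m * frobNorm (∑ k ∈ Icc 1 j, M k) :=
  stmt_12_general m M hM
end

section
/- Let χ ∈ (0,1), γ ∈ [0,χ), A a real d×d matrix and {Ā_k} a sequence of real d×d matrices. If ‖n^{-χ} Σ_{k=1}^n (Ā_k − A)‖ → 0 as n → ∞, then ‖n^{-χ} Σ_{k=1}^n ((k+1)/k)^{γ} (Ā_k − A)‖ → 0 as n → ∞. -/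
/-!
Abel summation rewrites `∑_{k ≤ n} c_k B_k` as `c_n S_n + ∑_{k < n} (c_k - c_{k+1}) S_k`, where
`S_n = ∑_{k ≤ n} B_k`. The coefficients `c_k = (1 + 1/k)^γ` are antitone and positive, so they are
bounded and of bounded variation; both terms are therefore `o(n^χ)` as soon as `S_n = o(n^χ)`.
-/

open Filter Finset Asymptotics
open scoped Topology

variable {E : Type*} [NormedAddCommGroup E] [NormedSpace ℝ E]

theorem sum_Icc_smul_by_parts (c : ℕ → ℝ) (B : ℕ → E) (n : ℕ) :
    ∑ k ∈ Icc 1 n, c k • B k =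
      c n • ∑ k ∈ Icc 1 n, B k + ∑ k ∈ range n, (c k - c (k + 1)) • ∑ j ∈ Icc 1 k, B j := by
  induction n with
  | zero => simp
  | succ n ih =>
    rw [sum_Icc_succ_top (by omega), ih, sum_range_succ, sum_Icc_succ_top (by omega)]
    module

theorem Antitone.summable_norm_sub_succ {c : ℕ → ℝ} (hc : Antitone c)
    (hbdd : BddBelow (Set.range c)) : Summable fun k => ‖c k - c (k + 1)‖ := by
  obtain ⟨m, hm⟩ := hbdd
  have hdiff : ∀ k, ‖c k - c (k + 1)‖ = c k - c (k + 1) := fun k =>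
    Real.norm_of_nonneg (sub_nonneg.2 (hc k.le_succ))
  refine summable_of_sum_range_le (c := c 0 - m) (fun _ => norm_nonneg _) fun n => ?_
  simp only [hdiff, sum_range_sub']
  linarith [hm (Set.mem_range_self n)]

theorem isLittleO_sum_range_smul {g : ℕ → ℝ} (hg_mono : Monotone g) (hg : Tendsto g atTop atTop)
    {a : ℕ → ℝ} (ha : Summable fun k => ‖a k‖) {f : ℕ → E} (hf : f =o[atTop] g) :
    (fun n => ∑ k ∈ range n, a k • f k) =o[atTop] g := by
  refine isLittleO_iff.2 fun ε hε => ?_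
  set T := ∑' k, ‖a k‖
  have hT : 0 ≤ T := tsum_nonneg fun _ => norm_nonneg _
  obtain ⟨N, hN⟩ := eventually_atTop.1
    ((hf.bound (by positivity : 0 < ε / (2 * (T + 1)))).and (hg.eventually_ge_atTop 0))
  have hhead : ∀ᶠ n in atTop, ∑ k ∈ range N, ‖a k • f k‖ ≤ ε / 2 * ‖g n‖ := by
    have hconst : (fun _ => ∑ k ∈ range N, ‖a k • f k‖) =o[atTop] g :=
      isLittleO_const_left.2 (Or.inr (tendsto_norm_atTop_atTop.comp hg))
    exact (hconst.bound (by positivity)).mono fun n hn => (le_abs_self _).trans hn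
  filter_upwards [hhead, eventually_ge_atTop N] with n hhead hn
  have hgn : 0 ≤ g n := (hN N le_rfl).2.trans (hg_mono hn)
  have htail : ∑ k ∈ Ico N n, ‖a k • f k‖ ≤ ε / 2 * ‖g n‖ :=
    calc ∑ k ∈ Ico N n, ‖a k • f k‖
        ≤ ∑ k ∈ Ico N n, ‖a k‖ * (ε / (2 * (T + 1)) * g n) := by
          refine sum_le_sum fun k hk => ?_
          obtain ⟨hNk, hkn⟩ := mem_Ico.1 hk
          obtain ⟨hfk, hgk⟩ := hN k hNk
          rw [norm_smul]
          gcongr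
          exact hfk.trans (by rw [Real.norm_of_nonneg hgk]; gcongr; exact hg_mono hkn.le)
      _ = (∑ k ∈ Ico N n, ‖a k‖) * (ε / (2 * (T + 1))) * g n := by rw [← sum_mul]; ring
      _ ≤ T * (ε / (2 * (T + 1))) * g n := by
          gcongr
          exact ha.sum_le_tsum _ fun _ _ => norm_nonneg _
      _ ≤ ε / 2 * ‖g n‖ := by
          rw [Real.norm_of_nonneg hgn]
          gcongr
          rw [mul_div_assoc', div_le_div_iff₀ (by positivity) two_pos]
          nlinarith
  calc ‖∑ k ∈ range n, a k • f k‖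
      ≤ ∑ k ∈ range n, ‖a k • f k‖ := norm_sum_le _ _
    _ = ∑ k ∈ range N, ‖a k • f k‖ + ∑ k ∈ Ico N n, ‖a k • f k‖ := (sum_range_add_sum_Ico _ hn).symm
    _ ≤ ε * ‖g n‖ := by linarith

theorem isLittleO_sum_Icc_smul {g : ℕ → ℝ} (hg_mono : Monotone g) (hg : Tendsto g atTop atTop)
    {c : ℕ → ℝ} (hc : Summable fun k => ‖c k - c (k + 1)‖) {B : ℕ → E}
    (hB : (fun n => ∑ k ∈ Icc 1 n, B k) =o[atTop] g) :
    (fun n => ∑ k ∈ Icc 1 n, c k • B k) =o[atTop] g := by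
  obtain ⟨L, hL⟩ := cauchySeq_tendsto_of_complete
    (cauchySeq_of_summable_dist (f := c) (by simpa only [dist_eq_norm] using hc))
  simp_rw [sum_Icc_smul_by_parts]
  refine IsLittleO.add ?_ (isLittleO_sum_range_smul hg_mono hg hc hB)
  have hbdd : c =O[atTop] fun _ => (1 : ℝ) := hL.isBigO_one ℝ
  simpa only [one_smul] using hbdd.smul_isLittleO hB

theorem tendsto_norm_rpow_neg_smul_iff_isLittleO (χ : ℝ) (X : ℕ → E) :
    Tendsto (fun n : ℕ => ‖(n : ℝ) ^ (-χ) • X n‖) atTop (𝓝 0) ↔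
      X =o[atTop] fun n : ℕ => (n : ℝ) ^ χ := by
  have hpos : ∀ᶠ n : ℕ in atTop, (n : ℝ) ^ χ = 0 → ‖X n‖ = 0 :=
    (eventually_ge_atTop 1).mono fun n hn h0 =>
      absurd h0 (Real.rpow_pos_of_pos (by exact_mod_cast hn) χ).ne'
  rw [← isLittleO_norm_left, isLittleO_iff_tendsto' hpos]
  refine tendsto_congr fun n => ?_
  rw [norm_smul, Real.norm_of_nonneg (by positivity), Real.rpow_neg n.cast_nonneg, inv_mul_eq_div]

theorem stmt_16_general (d : ℕ) (χ γ : ℝ) (hχ : χ ∈ Set.Ioo (0 : ℝ) 1)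
    (hγ : γ ∈ Set.Ico (0 : ℝ) χ)
    (A : EuclideanSpace ℝ (Fin d) →L[ℝ] EuclideanSpace ℝ (Fin d))
    (Ab : ℕ → EuclideanSpace ℝ (Fin d) →L[ℝ] EuclideanSpace ℝ (Fin d))
    (hcoefA : Tendsto (fun n : ℕ => ‖(n : ℝ) ^ (-χ) • ∑ k ∈ Icc 1 n, (Ab k - A)‖)
      atTop (𝓝 0)) :
    Tendsto (fun n : ℕ =>
        ‖(n : ℝ) ^ (-χ) • ∑ k ∈ Icc 1 n, (((k : ℝ) + 1) / (k : ℝ)) ^ γ • (Ab k - A)‖)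
      atTop (𝓝 0) := by
  have hg_mono : Monotone fun n : ℕ => (n : ℝ) ^ χ := fun m n hmn =>
    Real.rpow_le_rpow m.cast_nonneg (by exact_mod_cast hmn) hχ.1.le
  have hg : Tendsto (fun n : ℕ => (n : ℝ) ^ χ) atTop atTop :=
    (tendsto_rpow_atTop hχ.1).comp tendsto_natCast_atTop_atTop
  let c : ℕ → ℝ := fun k => (((k : ℝ) + 1) / k) ^ γ
  -- `c 0 = 0 ^ γ` is a junk value, so `c` is antitone only from `k = 1` on.
  have hc_anti : Antitone fun k => c (k + 1) := antitone_nat_of_succ_le fun k => by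
    refine Real.rpow_le_rpow (by positivity) ?_ hγ.1
    rw [div_le_div_iff₀ (by positivity) (by positivity)]
    push_cast
    nlinarith
  have hc : Summable fun k => ‖c k - c (k + 1)‖ :=
    (summable_nat_add_iff 1).1 <| hc_anti.summable_norm_sub_succ
      ⟨0, by rintro _ ⟨k, rfl⟩; positivity⟩
  have hB : (fun n => ∑ k ∈ Icc 1 n, (Ab k - A)) =o[atTop] fun n : ℕ => (n : ℝ) ^ χ :=
    (tendsto_norm_rpow_neg_smul_iff_isLittleO χ _).1 hcoefA
  exact (tendsto_norm_rpow_neg_smul_iff_isLittleO χ fun n => ∑ k ∈ Icc 1 n, c k • (Ab k - A)).2 <|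
    isLittleO_sum_Icc_smul hg_mono hg hc hB

/-- Step 2 of the proof of Theorem 1 (matrix part): if
`‖n^{-χ} Σ_{k=1}^n (Ā_k − A)‖ → 0` then
`‖n^{-χ} Σ_{k=1}^n ((k+1)/k)^γ (Ā_k − A)‖ → 0`. -/
theorem stmt_16 (d : ℕ) (hd : 0 < d) (χ γ : ℝ) (hχ : χ ∈ Set.Ioo (0 : ℝ) 1)
    (hγ : γ ∈ Set.Ico (0 : ℝ) χ)
    (A : EuclideanSpace ℝ (Fin d) →L[ℝ] EuclideanSpace ℝ (Fin d))
    (Ab : ℕ → EuclideanSpace ℝ (Fin d) →L[ℝ] EuclideanSpace ℝ (Fin d))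
    (hcoefA : Tendsto (fun n : ℕ => ‖(n : ℝ) ^ (-χ) • ∑ k ∈ Icc 1 n, (Ab k - A)‖)
      atTop (𝓝 0)) :
    Tendsto (fun n : ℕ =>
        ‖(n : ℝ) ^ (-χ) • ∑ k ∈ Icc 1 n, (((k : ℝ) + 1) / (k : ℝ)) ^ γ • (Ab k - A)‖)
      atTop (𝓝 0) :=
  stmt_16_general d χ γ hχ hγ A Ab hcoefA
end

section
/- Let χ ∈ (0,1), γ ∈ [0,χ), d a positive integer, h ∈ ℝ^d, {Ā_k} a sequence of real d×d matrices and {b̄_k} a sequence in ℝ^d. If |n^{-(χ−γ)} Σ_{k=1}^n (b̄_k − Ā_k h)| → 0 as n → ∞, then |n^{-χ} Σ_{k=1}^n (k+1)^{γ} (b̄_k − Ā_k h)| → 0 as n → ∞. -/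
open Filter Finset Asymptotics
open scoped Topology

/-!
Summation by parts expresses `∑ (k+1)^γ • v k` through the partial sums `S k = ∑_{j ≤ k} v j`
with nonnegative weight increments, so its norm is at most `2 (n+1)^γ max_{k ≤ n} ‖S k‖`
(Abel's inequality). Since `S k = o(k^(χ-γ))` and `k^(χ-γ)` increases to infinity, the running
maximum is also `o(n^(χ-γ))`, hence the weighted sum is `o(n^χ)`.
-/

theorem Finset.sum_Icc_one_eq_sum_range {M : Type*} [AddCommMonoid M] (w : ℕ → M) (n : ℕ) :
    ∑ k ∈ Icc 1 n, w k = ∑ i ∈ range n, w (i + 1) := by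
  rw [← Ico_add_one_right_eq_Icc, sum_Ico_eq_sum_range, add_tsub_cancel_right]
  simp only [add_comm]

section

variable {E : Type*} [SeminormedAddCommGroup E]

theorem Asymptotics.IsLittleO.eventually_forall_le_norm_le {S : ℕ → E} {g : ℕ → ℝ}
    (hS : S =o[atTop] g) (hg : Monotone g) (hg_top : Tendsto g atTop atTop) {ε : ℝ}
    (hε : 0 < ε) : ∀ᶠ n in atTop, ∀ k ≤ n, ‖S k‖ ≤ ε * g n := by
  obtain ⟨N, hN⟩ := eventually_atTop.1 ((hS.bound hε).and (hg_top.eventually_ge_atTop 0))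
  set C := ∑ k ∈ range N, ‖S k‖
  filter_upwards [eventually_ge_atTop N, hg_top.eventually_ge_atTop (C / ε)] with n hn hCn k hk
  rcases lt_or_ge k N with hkN | hkN
  · calc ‖S k‖ ≤ C := single_le_sum (fun j _ => norm_nonneg (S j)) (mem_range.2 hkN)
      _ ≤ ε * g n := by rwa [div_le_iff₀' hε] at hCn
  · obtain ⟨hSk, hgk⟩ := hN k hkN
    calc ‖S k‖ ≤ ε * ‖g k‖ := hSk
      _ = ε * g k := by rw [Real.norm_of_nonneg hgk]
      _ ≤ ε * g n := mul_le_mul_of_nonneg_left (hg hk) hε.le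

variable [NormedSpace ℝ E]

theorem norm_sum_range_smul_le_of_monotone {f : ℕ → ℝ} (hf : Monotone f) (hf0 : 0 ≤ f 0)
    {u : ℕ → E} {M : ℝ} {n : ℕ} (hM : ∀ k ≤ n, ‖∑ j ∈ range k, u j‖ ≤ M) :
    ‖∑ i ∈ range n, f i • u i‖ ≤ 2 * f (n - 1) * M := by
  set S : ℕ → E := fun k => ∑ j ∈ range k, u j
  have hM0 : 0 ≤ M := by simpa using hM 0 (Nat.zero_le n)
  have hdiff : ∀ i, 0 ≤ f (i + 1) - f i := fun i => sub_nonneg.2 (hf (Nat.le_succ i))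
  have hfn : 0 ≤ f (n - 1) := hf0.trans (hf (Nat.zero_le _))
  have hboundary : ‖f (n - 1) • S n‖ ≤ f (n - 1) * M := by
    rw [norm_smul, Real.norm_of_nonneg hfn]
    exact mul_le_mul_of_nonneg_left (hM n le_rfl) hfn
  have hbulk : ‖∑ i ∈ range (n - 1), (f (i + 1) - f i) • S (i + 1)‖ ≤ f (n - 1) * M :=
    calc ‖∑ i ∈ range (n - 1), (f (i + 1) - f i) • S (i + 1)‖
        ≤ ∑ i ∈ range (n - 1), (f (i + 1) - f i) * M := by
          refine (norm_sum_le _ _).trans (sum_le_sum fun i hi => ?_)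
          rw [norm_smul, Real.norm_of_nonneg (hdiff i)]
          exact mul_le_mul_of_nonneg_left (hM _ (by rw [mem_range] at hi; omega)) (hdiff i)
      _ = (f (n - 1) - f 0) * M := by rw [← sum_mul, sum_range_sub]
      _ ≤ f (n - 1) * M := by nlinarith
  rw [sum_range_by_parts]
  linarith [norm_sub_le (f (n - 1) • S n) (∑ i ∈ range (n - 1), (f (i + 1) - f i) • S (i + 1))]

theorem isLittleO_natCast_rpow_iff_tendsto_norm_smul {S : ℕ → E} (α : ℝ) :
    S =o[atTop] (fun n : ℕ => (n : ℝ) ^ α) ↔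
      Tendsto (fun n : ℕ => ‖(n : ℝ) ^ (-α) • S n‖) atTop (𝓝 0) := by
  rw [← isLittleOTVS_iff_isLittleO (𝕜 := ℝ), isLittleOTVS_iff_tendsto_inv_smul,
    ← tendsto_zero_iff_norm_tendsto_zero]
  · simp only [Real.rpow_neg (Nat.cast_nonneg _)]
  · filter_upwards [eventually_gt_atTop 0] with n hn h0
    exact absurd h0 (Real.rpow_pos_of_pos (Nat.cast_pos.2 hn) α).ne'

theorem isLittleO_sum_Icc_rpow_smul {v : ℕ → E} {α γ : ℝ} (hα : 0 < α) (hγ : 0 ≤ γ)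
    (hS : (fun n : ℕ => ∑ k ∈ Icc 1 n, v k) =o[atTop] fun n : ℕ => (n : ℝ) ^ α) :
    (fun n : ℕ => ∑ k ∈ Icc 1 n, ((k : ℝ) + 1) ^ γ • v k) =o[atTop]
      fun n : ℕ => (n : ℝ) ^ (α + γ) := by
  set f : ℕ → ℝ := fun i => ((i : ℝ) + 2) ^ γ
  have hf : Monotone f := fun a b hab =>
    Real.rpow_le_rpow (by positivity) (by gcongr) hγ
  have hg : Monotone fun n : ℕ => (n : ℝ) ^ α := fun a b hab =>
    Real.rpow_le_rpow (by positivity) (by gcongr) hα.le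
  have hg_top : Tendsto (fun n : ℕ => (n : ℝ) ^ α) atTop atTop :=
    (tendsto_rpow_atTop hα).comp tendsto_natCast_atTop_atTop
  simp only [sum_Icc_one_eq_sum_range] at hS ⊢
  refine IsLittleO.of_bound fun c hc => ?_
  filter_upwards [hS.eventually_forall_le_norm_le hg hg_top
    (by positivity : 0 < c / (2 * 3 ^ γ)), eventually_ge_atTop 1] with n hSn hn
  have hn' : (1 : ℝ) ≤ n := by exact_mod_cast hn
  have hfn : f (n - 1) ≤ 3 ^ γ * (n : ℝ) ^ γ := by
    rw [← Real.mul_rpow (by norm_num) (by positivity)]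
    exact (hf (Nat.sub_le n 1)).trans (Real.rpow_le_rpow (by positivity) (by linarith) hγ)
  calc ‖∑ i ∈ range n, ((((i + 1 : ℕ) : ℝ) + 1) ^ γ • v (i + 1))‖
      = ‖∑ i ∈ range n, f i • v (i + 1)‖ := by
        simp only [f, Nat.cast_add, Nat.cast_one, add_assoc, one_add_one_eq_two]
    _ ≤ 2 * f (n - 1) * (c / (2 * 3 ^ γ) * (n : ℝ) ^ α) :=
        norm_sum_range_smul_le_of_monotone hf (by positivity) hSn
    _ ≤ 2 * (3 ^ γ * (n : ℝ) ^ γ) * (c / (2 * 3 ^ γ) * (n : ℝ) ^ α) := by gcongr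
    _ = c * ‖(n : ℝ) ^ (α + γ)‖ := by
        rw [Real.norm_of_nonneg (by positivity), Real.rpow_add (by positivity)]
        field_simp

end

theorem stmt_17_general (d : ℕ) (χ γ : ℝ)
    (hγ : γ ∈ Set.Ico (0 : ℝ) χ)
    (h : EuclideanSpace ℝ (Fin d))
    (Ab : ℕ → EuclideanSpace ℝ (Fin d) →L[ℝ] EuclideanSpace ℝ (Fin d))
    (bb : ℕ → EuclideanSpace ℝ (Fin d))
    (hcoef : Tendsto (fun n : ℕ => ‖(n : ℝ) ^ (-(χ - γ)) • ∑ k ∈ Icc 1 n, (bb k - Ab k h)‖)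
      atTop (𝓝 0)) :
    Tendsto (fun n : ℕ =>
        ‖(n : ℝ) ^ (-χ) • ∑ k ∈ Icc 1 n, ((k : ℝ) + 1) ^ γ • (bb k - Ab k h)‖)
      atTop (𝓝 0) := by
  have hS := (isLittleO_natCast_rpow_iff_tendsto_norm_smul (χ - γ)).2 hcoef
  have hT := isLittleO_sum_Icc_rpow_smul (sub_pos.2 hγ.2) hγ.1 hS
  rwa [sub_add_cancel, isLittleO_natCast_rpow_iff_tendsto_norm_smul] at hT

/-- Step 2 of the proof of Theorem 1 (vector part): if
`|n^{-(χ−γ)} Σ_{k=1}^n (b̄_k − Ā_k h)| → 0` then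
`|n^{-χ} Σ_{k=1}^n (k+1)^γ (b̄_k − Ā_k h)| → 0`. -/
theorem stmt_17 (d : ℕ) (hd : 0 < d) (χ γ : ℝ) (hχ : χ ∈ Set.Ioo (0 : ℝ) 1)
    (hγ : γ ∈ Set.Ico (0 : ℝ) χ)
    (h : EuclideanSpace ℝ (Fin d))
    (Ab : ℕ → EuclideanSpace ℝ (Fin d) →L[ℝ] EuclideanSpace ℝ (Fin d))
    (bb : ℕ → EuclideanSpace ℝ (Fin d))
    (hcoef : Tendsto (fun n : ℕ => ‖(n : ℝ) ^ (-(χ - γ)) • ∑ k ∈ Icc 1 n, (bb k - Ab k h)‖)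
      atTop (𝓝 0)) :
    Tendsto (fun n : ℕ =>
        ‖(n : ℝ) ^ (-χ) • ∑ k ∈ Icc 1 n, ((k : ℝ) + 1) ^ γ • (bb k - Ab k h)‖)
      atTop (𝓝 0) :=
  stmt_17_general d χ γ hγ h Ab bb hcoef
end

section
/- Let χ ∈ (0,1) and a > 0, and define n_k = ⌊(ak)^{1/(1−χ)}⌋ for k ≥ 0 and a' = a/(1−χ). Then |Σ_{l=n_k}^{n_{k+1}−1} l^{-χ} − a'| → 0 as k → ∞. -/
/-!
Since `x ↦ x ^ (-χ)` is decreasing, the sum over `[n_k, n_{k+1})` differs from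
`∫ x ^ (-χ) = (n_{k+1} ^ (1 - χ) - n_k ^ (1 - χ)) / (1 - χ)` by at most `n_k ^ (-χ) → 0`.
By concavity of `t ↦ t ^ (1 - χ)`, flooring `(ak) ^ (1 / (1 - χ))` perturbs its `(1 - χ)`-th power
by at most `(1 - χ) n_k ^ (-χ) → 0`, so `n_k ^ (1 - χ) = ak + o(1)` and the integral tends to `a / (1 - χ)`.
-/

open Filter Finset
open scoped Topology

theorem AntitoneOn.sum_Ico_le_integral_add_sub {f : ℝ → ℝ} {m N : ℕ} (hmN : m ≤ N)
    (hf : AntitoneOn f (Set.Icc m N)) :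
    ∑ i ∈ Ico m N, f i ≤ (∫ x in m..N, f x) + f m - f N := by
  have hshift : ∑ i ∈ Ico m N, f ↑(i + 1) + f m = ∑ i ∈ Ico m N, f i + f N := by
    clear hf
    induction N, hmN using Nat.le_induction with
    | base => simp
    | succ N hmN ih =>
      rw [sum_Ico_succ_top hmN, sum_Ico_succ_top hmN]
      linarith
  linarith [hf.sum_le_integral_Ico hmN]

theorem tendsto_sum_Ico_rpow_neg {ι : Type*} {l : Filter ι} {χ c : ℝ} (hχ0 : 0 < χ)
    (hχ1 : χ < 1) {m N : ι → ℕ} (hmN : ∀ i, m i ≤ N i) (hm : Tendsto m l atTop)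
    (hc : Tendsto (fun i => (N i : ℝ) ^ (1 - χ) - (m i : ℝ) ^ (1 - χ)) l (𝓝 c)) :
    Tendsto (fun i => ∑ k ∈ Ico (m i) (N i), (k : ℝ) ^ (-χ)) l (𝓝 (c / (1 - χ))) := by
  have hintegral : ∀ i, ∫ x in (m i : ℝ)..N i, x ^ (-χ)
      = ((N i : ℝ) ^ (1 - χ) - (m i : ℝ) ^ (1 - χ)) / (1 - χ) := fun i => by
    rw [integral_rpow (Or.inl (by linarith)), neg_add_eq_sub]
  have hanti : ∀ᶠ i in l, AntitoneOn (fun x : ℝ => x ^ (-χ)) (Set.Icc (m i : ℝ) (N i)) := by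
    filter_upwards [hm.eventually_ge_atTop 1] with i hi x hx y _ hxy
    have hx0 : (0 : ℝ) < x := lt_of_lt_of_le (by exact_mod_cast hi) hx.1
    exact Real.rpow_le_rpow_of_nonpos hx0 hxy (by linarith)
  have hlower := hc.div_const (1 - χ)
  have hupper : Tendsto (fun i => ((N i : ℝ) ^ (1 - χ) - (m i : ℝ) ^ (1 - χ)) / (1 - χ)
      + (m i : ℝ) ^ (-χ)) l (𝓝 (c / (1 - χ))) := by
    simpa using hlower.add ((tendsto_rpow_neg_atTop hχ0).comp
      (tendsto_natCast_atTop_atTop.comp hm))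
  refine tendsto_of_tendsto_of_tendsto_of_le_of_le' hlower hupper ?_ ?_
  · filter_upwards [hanti] with i hi
    exact hintegral i ▸ hi.integral_le_sum_Ico (hmN i)
  · filter_upwards [hanti] with i hi
    have := hi.sum_Ico_le_integral_add_sub (hmN i)
    rw [hintegral] at this
    linarith [Real.rpow_nonneg (Nat.cast_nonneg (N i)) (-χ)]

theorem add_one_rpow_le_rpow_add_mul_rpow_sub_one {q y : ℝ} (hq0 : 0 ≤ q) (hq1 : q ≤ 1)
    (hy : 0 < y) : (y + 1) ^ q ≤ y ^ q + q * y ^ (q - 1) := by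
  have hb := rpow_one_add_le_one_add_mul_self (s := y⁻¹) (by linarith [inv_pos.2 hy]) hq0 hq1
  calc (y + 1) ^ q = y ^ q * (1 + y⁻¹) ^ q := by
        rw [← Real.mul_rpow hy.le (by positivity)]; field_simp
    _ ≤ y ^ q * (1 + q * y⁻¹) := by gcongr
    _ = y ^ q + q * y ^ (q - 1) := by
        rw [Real.rpow_sub_one hy.ne']; ring

theorem tendsto_natFloor_rpow_inv_rpow_sub {q : ℝ} (hq0 : 0 < q) (hq1 : q < 1) :
    Tendsto (fun x : ℝ => (⌊x ^ (1 / q)⌋₊ : ℝ) ^ q - x) atTop (𝓝 0) := by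
  set n : ℝ → ℕ := fun x => ⌊x ^ (1 / q)⌋₊
  have hn : Tendsto (fun x => (n x : ℝ)) atTop atTop :=
    tendsto_natCast_atTop_atTop.comp
      (tendsto_nat_floor_atTop.comp (tendsto_rpow_atTop (by positivity)))
  have hupper : ∀ᶠ x in atTop, (n x : ℝ) ^ q - x ≤ 0 := by
    filter_upwards [eventually_ge_atTop 0] with x hx
    have hle : (n x : ℝ) ≤ x ^ q⁻¹ := by rw [← one_div]; exact Nat.floor_le (by positivity)
    linarith [(Real.le_rpow_inv_iff_of_pos (Nat.cast_nonneg _) hx hq0).1 hle]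
  have hlower : ∀ᶠ x in atTop, -(q * (n x : ℝ) ^ (q - 1)) ≤ (n x : ℝ) ^ q - x := by
    filter_upwards [eventually_ge_atTop 0, hn.eventually_gt_atTop 0] with x hx hnx
    have hlt : x < ((n x : ℝ) + 1) ^ q := by
      have : x ^ q⁻¹ < n x + 1 := by rw [← one_div]; exact Nat.lt_floor_add_one _
      exact (Real.rpow_inv_lt_iff_of_pos hx (by positivity) hq0).1 this
    linarith [add_one_rpow_le_rpow_add_mul_rpow_sub_one hq0.le hq1.le hnx]
  have hvanish : Tendsto (fun x => -(q * (n x : ℝ) ^ (q - 1))) atTop (𝓝 0) := by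
    simpa using ((tendsto_rpow_neg_atTop (by linarith : 0 < 1 - q)).comp hn).const_mul q |>.neg
  exact tendsto_of_tendsto_of_tendsto_of_le_of_le' hvanish tendsto_const_nhds hlower hupper

/-- Equation (32): with `n_k = ⌊(ak)^{1/(1−χ)}⌋` and `a' = a/(1−χ)`,
`|Σ_{l=n_k}^{n_{k+1}−1} l^{-χ} − a'| → 0` as `k → ∞`. -/
theorem stmt_18 (χ a : ℝ) (hχ : χ ∈ Set.Ioo (0 : ℝ) 1) (ha : 0 < a) :
    Tendsto (fun k : ℕ =>
        |(∑ l ∈ Ico (⌊(a * k) ^ (1 / (1 - χ))⌋₊) (⌊(a * (k + 1)) ^ (1 / (1 - χ))⌋₊),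
          (l : ℝ) ^ (-χ)) - a / (1 - χ)|)
      atTop (𝓝 0) := by
  obtain ⟨hχ0, hχ1⟩ := hχ
  have hq : 0 < 1 - χ := by linarith
  have hak : Tendsto (fun k : ℕ => a * k) atTop atTop :=
    tendsto_natCast_atTop_atTop.const_mul_atTop ha
  have hak1 : Tendsto (fun k : ℕ => a * (k + 1)) atTop atTop :=
    (tendsto_atTop_add_const_right _ 1 tendsto_natCast_atTop_atTop).const_mul_atTop ha
  have hmono : ∀ k : ℕ, ⌊(a * k) ^ (1 / (1 - χ))⌋₊ ≤ ⌊(a * (k + 1)) ^ (1 / (1 - χ))⌋₊ :=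
    fun k => Nat.floor_le_floor <| Real.rpow_le_rpow (by positivity) (by nlinarith) (by positivity)
  have hfloor : Tendsto (fun k : ℕ => ⌊(a * k) ^ (1 / (1 - χ))⌋₊) atTop atTop :=
    tendsto_nat_floor_atTop.comp ((tendsto_rpow_atTop (by positivity)).comp hak)
  have herr := tendsto_natFloor_rpow_inv_rpow_sub (q := 1 - χ) hq (by linarith)
  have hgap := ((herr.comp hak1).sub (herr.comp hak)).const_add a
  simp only [Function.comp_def, add_zero, sub_zero] at hgap
  have hsum := tendsto_sum_Ico_rpow_neg hχ0 hχ1 hmono hfloor (c := a) (by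
    convert hgap using 2 with k; ring)
  simpa using (hsum.sub_const (a / (1 - χ))).abs
end

section
/- Let χ ∈ (0,1), θ ∈ (χ,1], η̄ > 0, {η_l} real numbers with 0 ≤ η_l ≤ η̄ l^{-θ}, and A a symmetric positive-definite real d×d matrix with smallest eigenvalue λ_min > 0. Then there is a constant C > 0 such that for all integers 1 ≤ r < n, ‖∏_{l=r+1}^{n−1} ((1+η_l)I − l^{-χ}A)‖ ≤ C · exp(−(λ_min/(2−2χ)) · (n^{1−χ} − (r+1)^{1−χ})), where the product is taken in decreasing order of index. -/
/-!
For large `l` the factor `B_l = (1 + η_l) I - l^{-χ} A` is symmetric with spectrum in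
`[1 + η_l - l^{-χ} ‖A‖, 1 + η_l - l^{-χ} λ_min]`, and since `θ > χ`, eventually
`η_l ≤ (λ_min / 2) l^{-χ}`; hence `‖B_l‖ ≤ 1 - (λ_min / 2) l^{-χ} ≤ exp (-(λ_min / 2) l^{-χ})`.
The finitely many remaining factors only contribute a constant, and comparing
`∑_{l=r+1}^{n-1} l^{-χ}` with `∫_{r+1}^{n} x^{-χ} dx` yields the rate `λ_min / (2 - 2χ)`.
-/

open Filter Finset
open scoped RealInnerProductSpace Topology

section prodDesc

variable {d : ℕ} (B : ℕ → EuclideanSpace ℝ (Fin d) →L[ℝ] EuclideanSpace ℝ (Fin d))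

lemma prodDesc_self (p : ℕ) : prodDesc B p p = B p := by
  simp [prodDesc]

lemma prodDesc_succ {p q : ℕ} (h : p ≤ q + 1) :
    prodDesc B p (q + 1) = B (q + 1) * prodDesc B p q := by
  simp [prodDesc, show q + 1 + 1 - p = q + 1 - p + 1 by omega, List.range_succ_eq_map,
    Function.comp_def]

lemma prodDesc_of_lt {p q : ℕ} (h : q < p) : prodDesc B p q = 1 := by
  simp [prodDesc, show q + 1 - p = 0 by omega]

lemma norm_prodDesc_le (p q : ℕ) : ‖prodDesc B p q‖ ≤ ∏ l ∈ Icc p q, ‖B l‖ := by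
  rcases lt_or_ge q p with hqp | hpq
  · rw [prodDesc_of_lt B hqp, Icc_eq_empty_of_lt hqp, prod_empty]
    exact ContinuousLinearMap.norm_id_le
  induction q, hpq using Nat.le_induction with
  | base => simp [prodDesc_self]
  | succ q hpq ih =>
    rw [prodDesc_succ B (by omega), prod_Icc_succ_top (by omega), mul_comm]
    exact (norm_mul_le _ _).trans (by gcongr)

end prodDesc

section Spectral

variable {E : Type*} [NormedAddCommGroup E] [InnerProductSpace ℝ E]

lemma abs_le_opNorm_of_apply_eq_smul (A : E →L[ℝ] E) {μ : ℝ} {x : E} (hx : x ≠ 0)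
    (h : A x = μ • x) : |μ| ≤ ‖A‖ := by
  have := A.le_opNorm x
  rw [h, norm_smul, Real.norm_eq_abs] at this
  exact le_of_mul_le_mul_right this (norm_pos_iff.mpr hx)

lemma opNorm_le_of_isSymmetric [FiniteDimensional ℝ E] {T : E →L[ℝ] E}
    (hT : (T : E →ₗ[ℝ] E).IsSymmetric) {K : ℝ} (hK : 0 ≤ K)
    (h : ∀ (μ : ℝ) (x : E), x ≠ 0 → T x = μ • x → |μ| ≤ K) : ‖T‖ ≤ K := by
  set e := hT.eigenvectorBasis rfl
  have hμ : ∀ i, |hT.eigenvalues rfl i| ≤ K := fun i =>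
    h _ _ (hT.hasEigenvector_eigenvectorBasis rfl i).2 (hT.apply_eigenvectorBasis rfl i)
  refine T.opNorm_le_bound hK fun x => ?_
  rw [← e.repr.norm_map, ← e.repr.norm_map x]
  refine le_of_sq_le_sq ?_ (by positivity)
  rw [mul_pow, EuclideanSpace.norm_sq_eq, EuclideanSpace.norm_sq_eq, mul_sum]
  refine sum_le_sum fun i _ => ?_
  rw [show e.repr (T x) i = _ from hT.eigenvectorBasis_apply_self_apply rfl x i, norm_mul,
    mul_pow, Real.norm_eq_abs]
  gcongr
  exact hμ i

lemma opNorm_smul_one_sub_smul_le [FiniteDimensional ℝ E] {A : E →L[ℝ] E}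
    (hA : (A : E →ₗ[ℝ] E).IsSymmetric) {lmin : ℝ}
    (hmin : ∀ (μ : ℝ) (x : E), x ≠ 0 → A x = μ • x → lmin ≤ μ) {a t : ℝ} (ht : 0 < t)
    (htA : t * ‖A‖ ≤ a) (htmin : t * lmin ≤ a) :
    ‖a • (1 : E →L[ℝ] E) - t • A‖ ≤ a - t * lmin := by
  refine opNorm_le_of_isSymmetric (fun x y => ?_) (by linarith) fun ν x hx hν => ?_
  · have hAxy : ⟪A x, y⟫ = ⟪x, A y⟫ := hA x y
    simp only [ContinuousLinearMap.toLinearMap_sub, ContinuousLinearMap.toLinearMap_smul,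
      LinearMap.sub_apply, LinearMap.smul_apply, ContinuousLinearMap.coe_coe, one_apply_eq_self,
      inner_sub_left, inner_sub_right, real_inner_smul_left, real_inner_smul_right, hAxy]
  · have hAx : A x = ((a - ν) / t) • x := by
      have : t • A x = (a - ν) • x := by
        simp only [sub_apply, smul_apply, one_apply_eq_self] at hν
        rw [sub_smul, ← hν]
        abel
      rw [div_eq_inv_mul, mul_smul, ← this, smul_smul, inv_mul_cancel₀ ht.ne', one_smul]
    have hlow := hmin _ x hx hAx
    have hup := (abs_le_opNorm_of_apply_eq_smul A hx hAx).trans' (le_abs_self _)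
    rw [le_div_iff₀ ht] at hlow
    rw [div_le_iff₀ ht] at hup
    rw [abs_le]
    constructor <;> nlinarith

end Spectral

lemma exists_prod_le_mul_prod_of_eventually_le {a f : ℕ → ℝ} (ha : ∀ l, 0 ≤ a l)
    (hf : ∀ l, 0 < f l) (h : ∀ᶠ l in atTop, a l ≤ f l) :
    ∃ C > 0, ∀ s : Finset ℕ, ∏ l ∈ s, a l ≤ C * ∏ l ∈ s, f l := by
  obtain ⟨L, hL⟩ := eventually_atTop.mp h
  set w : ℕ → ℝ := fun l => max 1 (a l / f l)
  have hw : ∀ l, 1 ≤ w l := fun l => le_max_left _ _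
  have hw_of_ge : ∀ l, L ≤ l → w l = 1 := fun l hl =>
    max_eq_left ((div_le_one (hf l)).mpr (hL l hl))
  refine ⟨∏ l ∈ range L, w l, prod_pos fun l _ => one_pos.trans_le (hw l), fun s => ?_⟩
  calc ∏ l ∈ s, a l ≤ ∏ l ∈ s, w l * f l :=
        prod_le_prod (fun l _ => ha l) fun l _ => (div_le_iff₀ (hf l)).mp (le_max_right _ _)
    _ = (∏ l ∈ s with l < L, w l) * ∏ l ∈ s, f l := by
        rw [prod_mul_distrib, prod_filter_of_ne fun l _ hl => ?_]
        by_contra hlL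
        exact hl (hw_of_ge l (not_lt.mp hlL))
    _ ≤ (∏ l ∈ range L, w l) * ∏ l ∈ s, f l := by
        gcongr ?_ * _
        · exact prod_nonneg fun l _ => (hf l).le
        · exact prod_le_prod_of_subset_of_one_le (fun l hl => mem_range.mpr (mem_filter.mp hl).2)
            (fun l _ => zero_le_one.trans (hw l)) fun l _ _ => hw l

lemma sub_rpow_div_le_sum_rpow_neg {χ : ℝ} (hχ0 : 0 ≤ χ) (hχ1 : χ < 1) {m n : ℕ} (hm : 1 ≤ m)
    (hmn : m ≤ n) :
    ((n : ℝ) ^ (1 - χ) - (m : ℝ) ^ (1 - χ)) / (1 - χ) ≤ ∑ l ∈ Ico m n, (l : ℝ) ^ (-χ) := by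
  have hm0 : (0 : ℝ) < m := by exact_mod_cast hm
  calc ((n : ℝ) ^ (1 - χ) - (m : ℝ) ^ (1 - χ)) / (1 - χ) = ∫ x in (m : ℝ)..n, x ^ (-χ) := by
        rw [integral_rpow (Or.inl (by linarith))]
        ring_nf
    _ ≤ ∑ l ∈ Ico m n, (l : ℝ) ^ (-χ) := by
        refine integral_le_sum_Ico_of_le (f := fun x : ℝ => x ^ (-χ)) hmn
          (fun i hi x hx => ?_)
          ((ContinuousOn.integrableOn_Icc fun x hx => ?_).mono_set Set.Ico_subset_Icc_self)
        · have hi0 : (0 : ℝ) < i := by exact_mod_cast hm.trans hi.1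
          exact Real.rpow_le_rpow_of_nonpos hi0 hx.1 (by linarith)
        · exact (Real.continuousAt_rpow_const _ _
            (Or.inl (hm0.trans_le hx.1).ne')).continuousWithinAt

lemma eventually_mul_rpow_neg_le_mul_rpow_neg {χ θ : ℝ} (h : χ < θ) (K : ℝ) {c : ℝ}
    (hc : 0 < c) :
    ∀ᶠ x : ℝ in atTop, K * x ^ (-θ) ≤ c * x ^ (-χ) := by
  have hlim : Tendsto (fun x : ℝ => K * x ^ (-(θ - χ))) atTop (𝓝 (K * 0)) :=
    (tendsto_rpow_neg_atTop (sub_pos.mpr h)).const_mul K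
  filter_upwards [hlim.eventually_lt_const (by simpa using hc), eventually_gt_atTop 0]
    with x hx hx0
  calc K * x ^ (-θ) = K * x ^ (-(θ - χ)) * x ^ (-χ) := by
        rw [mul_assoc, ← Real.rpow_add hx0]
        ring_nf
    _ ≤ c * x ^ (-χ) := by gcongr

lemma eventually_rpow_neg_mul_le_one {χ : ℝ} (hχ : 0 < χ) (K : ℝ) :
    ∀ᶠ x : ℝ in atTop, x ^ (-χ) * K ≤ 1 := by
  have hlim : Tendsto (fun x : ℝ => x ^ (-χ) * K) atTop (𝓝 (0 * K)) :=
    (tendsto_rpow_neg_atTop hχ).mul_const K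
  exact (hlim.eventually_lt_const (by simp)).mono fun x hx => hx.le

lemma eventually_opNorm_one_add_smul_sub_smul_le_exp {E : Type*} [NormedAddCommGroup E]
    [InnerProductSpace ℝ E] [FiniteDimensional ℝ E] {A : E →L[ℝ] E}
    (hA : (A : E →ₗ[ℝ] E).IsSymmetric) {lmin : ℝ} (hlmin : 0 < lmin)
    (hmin : ∀ (μ : ℝ) (x : E), x ≠ 0 → A x = μ • x → lmin ≤ μ) {χ θ η' : ℝ} (hχ : 0 < χ)
    (hχθ : χ < θ) {η : ℕ → ℝ} (hη : ∀ l : ℕ, 1 ≤ l → 0 ≤ η l ∧ η l ≤ η' * (l : ℝ) ^ (-θ)) :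
    ∀ᶠ l : ℕ in atTop,
      ‖(1 + η l) • (1 : E →L[ℝ] E) - (l : ℝ) ^ (-χ) • A‖ ≤
        Real.exp (-(lmin / 2 * (l : ℝ) ^ (-χ))) := by
  have hreal : ∀ᶠ x : ℝ in atTop, 0 < x ∧ x ^ (-χ) * ‖A‖ ≤ 1 ∧ x ^ (-χ) * lmin ≤ 1 ∧
      η' * x ^ (-θ) ≤ lmin / 2 * x ^ (-χ) :=
    (eventually_gt_atTop 0).and <| (eventually_rpow_neg_mul_le_one hχ _).and <|
      (eventually_rpow_neg_mul_le_one hχ _).and <|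
        eventually_mul_rpow_neg_le_mul_rpow_neg hχθ η' (half_pos hlmin)
  filter_upwards [tendsto_natCast_atTop_atTop.eventually hreal, eventually_ge_atTop 1]
    with l ⟨hl0, htA, htmin, hθχ⟩ hl1
  obtain ⟨hη0, hηθ⟩ := hη l hl1
  have hηχ : η l ≤ lmin / 2 * (l : ℝ) ^ (-χ) := hηθ.trans hθχ
  have := Real.add_one_le_exp (-(lmin / 2 * (l : ℝ) ^ (-χ)))
  refine (opNorm_smul_one_sub_smul_le hA hmin (Real.rpow_pos_of_pos hl0 _) ?_ ?_).trans ?_ <;>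
    linarith

lemma prod_exp_neg_mul_rpow_neg_le {χ : ℝ} (hχ0 : 0 ≤ χ) (hχ1 : χ < 1) {c : ℝ} (hc : 0 ≤ c)
    {m n : ℕ} (hm : 1 ≤ m) (hmn : m ≤ n) :
    ∏ l ∈ Ico m n, Real.exp (-(c * (l : ℝ) ^ (-χ))) ≤
      Real.exp (-(c / (1 - χ)) * ((n : ℝ) ^ (1 - χ) - (m : ℝ) ^ (1 - χ))) := by
  rw [← Real.exp_sum, Real.exp_le_exp, sum_neg_distrib, ← mul_sum, neg_mul, neg_le_neg_iff,
    div_mul_comm, mul_comm]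
  exact mul_le_mul_of_nonneg_left (sub_rpow_div_le_sum_rpow_neg hχ0 hχ1 hm hmn) hc

theorem stmt_19_general (d : ℕ) (χ θ η' : ℝ) (hχ : χ ∈ Set.Ioo (0 : ℝ) 1)
    (hθ : θ ∈ Set.Ioc χ 1)
    (η : ℕ → ℝ) (hη : ∀ l : ℕ, 1 ≤ l → 0 ≤ η l ∧ η l ≤ η' * (l : ℝ) ^ (-θ))
    (A : EuclideanSpace ℝ (Fin d) →L[ℝ] EuclideanSpace ℝ (Fin d))
    (hAsym : ∀ x y : EuclideanSpace ℝ (Fin d), ⟪A x, y⟫ = ⟪x, A y⟫)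
    (lmin : ℝ) (hlmin : 0 < lmin)
    (hmin : ∀ (lam : ℝ) (x : EuclideanSpace ℝ (Fin d)), x ≠ 0 → A x = lam • x → lmin ≤ lam) :
    ∃ C : ℝ, 0 < C ∧ ∀ r n : ℕ, 1 ≤ r → r < n →
      ‖prodDesc (fun l => (1 + η l) • 1 - (l : ℝ) ^ (-χ) • A) (r + 1) (n - 1)‖ ≤
        C * Real.exp (-(lmin / (2 - 2 * χ)) *
          ((n : ℝ) ^ (1 - χ) - ((r : ℝ) + 1) ^ (1 - χ))) := by
  obtain ⟨hχ0, hχ1⟩ := hχ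
  obtain ⟨C, hC, hprod⟩ := exists_prod_le_mul_prod_of_eventually_le (fun _ => norm_nonneg _)
    (fun _ => Real.exp_pos _) <|
      eventually_opNorm_one_add_smul_sub_smul_le_exp (fun x y => hAsym x y) hlmin hmin hχ0 hθ.1 hη
  refine ⟨C, hC, fun r n hr hrn => ?_⟩
  have hIcc : Icc (r + 1) (n - 1) = Ico (r + 1) n := by
    rw [← Ico_add_one_right_eq_Icc]
    congr 1
    omega
  have hrate : lmin / (2 - 2 * χ) = lmin / 2 / (1 - χ) := by
    rw [div_div]
    ring_nf
  calc _ ≤ C * ∏ l ∈ Ico (r + 1) n, Real.exp (-(lmin / 2 * (l : ℝ) ^ (-χ))) :=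
        (norm_prodDesc_le _ _ _).trans (hIcc ▸ hprod _)
    _ ≤ _ := by
        rw [hrate]
        gcongr
        exact_mod_cast prod_exp_neg_mul_rpow_neg_le hχ0.le hχ1 (half_pos hlmin).le (by omega) hrn

/-- Equation (54): there is a constant `C > 0` such that for all `1 ≤ r < n`,
`‖∏_{l=r+1}^{n−1} ((1+η_l)I − l^{-χ}A)‖ ≤ C exp(−(λ_min/(2−2χ))(n^{1−χ} − (r+1)^{1−χ}))`,
where `λ_min > 0` is the smallest eigenvalue of the symmetric positive-definite `A`. -/
theorem stmt_19 (d : ℕ) (hd : 0 < d) (χ θ η' : ℝ) (hχ : χ ∈ Set.Ioo (0 : ℝ) 1)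
    (hθ : θ ∈ Set.Ioc χ 1) (hη' : 0 < η')
    (η : ℕ → ℝ) (hη : ∀ l : ℕ, 1 ≤ l → 0 ≤ η l ∧ η l ≤ η' * (l : ℝ) ^ (-θ))
    (A : EuclideanSpace ℝ (Fin d) →L[ℝ] EuclideanSpace ℝ (Fin d))
    (hAsym : ∀ x y : EuclideanSpace ℝ (Fin d), ⟪A x, y⟫ = ⟪x, A y⟫)
    (lmin : ℝ) (hlmin : 0 < lmin)
    (heig : ∃ x : EuclideanSpace ℝ (Fin d), x ≠ 0 ∧ A x = lmin • x)
    (hmin : ∀ (lam : ℝ) (x : EuclideanSpace ℝ (Fin d)), x ≠ 0 → A x = lam • x → lmin ≤ lam) :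
    ∃ C : ℝ, 0 < C ∧ ∀ r n : ℕ, 1 ≤ r → r < n →
      ‖prodDesc (fun l => (1 + η l) • 1 - (l : ℝ) ^ (-χ) • A) (r + 1) (n - 1)‖ ≤
        C * Real.exp (-(lmin / (2 - 2 * χ)) *
          ((n : ℝ) ^ (1 - χ) - ((r : ℝ) + 1) ^ (1 - χ))) :=
  stmt_19_general d χ θ η' hχ hθ η hη A hAsym lmin hlmin hmin
end
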